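/- arXiv:1906.04387 — 9 statements merged into one kernel-verified Lean document; each statement's English description precedes it below -/
import Mathlib

section
/- Let E be a finite-dimensional real normed space, T₀ > 0, F₀ : E → E a C¹ vector field, and γ₀ : ℝ → E a T₀-periodic solution of x' = F₀(x), i.e. γ₀(t + T₀) = γ₀(t) and γ₀'(t) = F₀(γ₀(t)) for all t. Let Φ : ℝ → (E →L[ℝ] E) be the fundamental solution of the variational equation, i.e. Φ(0) = id and Φ'(t) = DF₀(γ₀(t)) ∘ Φ(t) for all t (where DF₀ denotes the Fréchet derivative of F₀), and assume hyperbolic stability in the form: every v ∈ E with Φ(T₀) v = v is a scalar multiple of F₀(γ₀(0)). Let c : ℝ → E be any function, and let a, b : ℝ → E be two T₀-periodic differentiable functions each satisfying x'(t) = DF₀(γ₀(t)) x(t) + c(t) for all t. Then there exists a constant φ ∈ ℝ such that b(t) − a(t) = φ • F₀(γ₀(t)) for all t ∈ ℝ. -/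
/-!
The difference `y = b - a` solves the homogeneous variational equation `y' = DF₀(γ₀ t) y`, so
`y t = Φ t (y 0)`; periodicity of `y` makes `y 0` a fixed point of the monodromy `Φ T₀`, hence
`y 0 = φ • F₀ (γ₀ 0)`. Differentiating `γ₀' = F₀ ∘ γ₀` shows that `φ • F₀ ∘ γ₀` solves the same
linear equation with the same initial value, so the two agree by uniqueness.
-/

open Set

theorem linear_ODE_solution_unique {E : Type*} [NormedAddCommGroup E] [NormedSpace ℝ E]
    {A : ℝ → E →L[ℝ] E} (hA : Continuous A) {f g : ℝ → E} {t₀ : ℝ}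
    (hf : ∀ t, HasDerivAt f (A t (f t)) t) (hg : ∀ t, HasDerivAt g (A t (g t)) t)
    (h₀ : f t₀ = g t₀) : f = g := by
  ext t
  obtain ⟨a, b, ht, ht₀⟩ : ∃ a b, t ∈ Ioo a b ∧ t₀ ∈ Ioo a b :=
    ⟨min t t₀ - 1, max t t₀ + 1, by grind, by grind⟩
  obtain ⟨C, hC⟩ := isCompact_Icc.exists_bound_of_continuousOn (hA.continuousOn (s := Icc a b))
  have hLip : ∀ s ∈ Ioo a b, LipschitzOnWith C.toNNReal (A s) univ := fun s hs ↦
    (ContinuousLinearMap.lipschitzWith_of_opNorm_le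
      ((hC s (Ioo_subset_Icc_self hs)).trans (Real.le_coe_toNNReal C))).lipschitzOnWith
  exact ODE_solution_unique_of_mem_Ioo hLip ht₀ (fun s _ ↦ ⟨hf s, mem_univ _⟩)
    (fun s _ ↦ ⟨hg s, mem_univ _⟩) h₀ ht

theorem linear_ODE_solution_eq_fundamental_apply {E : Type*} [NormedAddCommGroup E] [NormedSpace ℝ E]
    {A Φ : ℝ → E →L[ℝ] E} (hA : Continuous A) (hΦ₀ : Φ 0 = ContinuousLinearMap.id ℝ E)
    (hΦ : ∀ t, HasDerivAt Φ ((A t).comp (Φ t)) t) {y : ℝ → E}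
    (hy : ∀ t, HasDerivAt y (A t (y t)) t) (t : ℝ) : y t = Φ t (y 0) := by
  have hΦy : ∀ t, HasDerivAt (fun s ↦ Φ s (y 0)) (A t (Φ t (y 0))) t := fun t ↦ by
    simpa using (hΦ t).clm_apply (hasDerivAt_const t (y 0))
  exact congrFun (linear_ODE_solution_unique hA hy hΦy (t₀ := 0) (by simp [hΦ₀])) t

theorem stmt0_general
    {E : Type*} [NormedAddCommGroup E] [NormedSpace ℝ E]
    (T₀ : ℝ)
    (F₀ : E → E) (hF₀ : ContDiff ℝ 1 F₀)
    (γ₀ : ℝ → E)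
    (hγode : ∀ t, HasDerivAt γ₀ (F₀ (γ₀ t)) t)
    (Φ : ℝ → E →L[ℝ] E)
    (hΦ0 : Φ 0 = ContinuousLinearMap.id ℝ E)
    (hΦode : ∀ t, HasDerivAt Φ ((fderiv ℝ F₀ (γ₀ t)).comp (Φ t)) t)
    (hhyp : ∀ v : E, Φ T₀ v = v → ∃ c : ℝ, v = c • F₀ (γ₀ 0))
    (c : ℝ → E) (a b : ℝ → E)
    (haper : ∀ t, a (t + T₀) = a t) (hbper : ∀ t, b (t + T₀) = b t)
    (haode : ∀ t, HasDerivAt a (fderiv ℝ F₀ (γ₀ t) (a t) + c t) t)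
    (hbode : ∀ t, HasDerivAt b (fderiv ℝ F₀ (γ₀ t) (b t) + c t) t) :
    ∃ φ : ℝ, ∀ t, b t - a t = φ • F₀ (γ₀ t) := by
  set A : ℝ → E →L[ℝ] E := fun t ↦ fderiv ℝ F₀ (γ₀ t)
  have hA : Continuous A :=
    (hF₀.continuous_fderiv one_ne_zero).comp (continuous_iff_continuousAt.2 fun t ↦
      (hγode t).continuousAt)
  have hdiff : ∀ t, HasDerivAt (b - a) (A t ((b - a) t)) t := fun t ↦ by
    simpa [A, map_sub] using (hbode t).sub (haode t)
  have hfix : Φ T₀ ((b - a) 0) = (b - a) 0 := by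
    rw [← linear_ODE_solution_eq_fundamental_apply hA hΦ0 hΦode hdiff T₀]
    simpa using congr($(hbper 0) - $(haper 0))
  obtain ⟨φ, hφ⟩ := hhyp _ hfix
  have hflow : ∀ t, HasDerivAt (φ • (F₀ ∘ γ₀)) (A t (φ • F₀ (γ₀ t))) t := fun t ↦ by
    simpa [A] using (((hF₀.differentiable one_ne_zero _).hasFDerivAt.comp_hasDerivAt t
      (hγode t)).const_smul φ)
  exact ⟨φ, congrFun (linear_ODE_solution_unique hA hdiff hflow (t₀ := 0) hφ)⟩

/-- Lemma 2.1: any two T₀-periodic solutions of the iSRC equation differ by a constant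
multiple of the vector field along the limit cycle. -/
theorem stmt0
    {E : Type*} [NormedAddCommGroup E] [NormedSpace ℝ E] [FiniteDimensional ℝ E]
    (T₀ : ℝ) (hT₀ : 0 < T₀)
    (F₀ : E → E) (hF₀ : ContDiff ℝ 1 F₀)
    (γ₀ : ℝ → E)
    (hγper : ∀ t, γ₀ (t + T₀) = γ₀ t)
    (hγode : ∀ t, HasDerivAt γ₀ (F₀ (γ₀ t)) t)
    (Φ : ℝ → E →L[ℝ] E)
    (hΦ0 : Φ 0 = ContinuousLinearMap.id ℝ E)
    (hΦode : ∀ t, HasDerivAt Φ ((fderiv ℝ F₀ (γ₀ t)).comp (Φ t)) t)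
    (hhyp : ∀ v : E, Φ T₀ v = v → ∃ c : ℝ, v = c • F₀ (γ₀ 0))
    (c : ℝ → E) (a b : ℝ → E)
    (haper : ∀ t, a (t + T₀) = a t) (hbper : ∀ t, b (t + T₀) = b t)
    (haode : ∀ t, HasDerivAt a (fderiv ℝ F₀ (γ₀ t) (a t) + c t) t)
    (hbode : ∀ t, HasDerivAt b (fderiv ℝ F₀ (γ₀ t) (b t) + c t) t) :
    ∃ φ : ℝ, ∀ t, b t - a t = φ • F₀ (γ₀ t) :=
  stmt0_general T₀ F₀ hF₀ γ₀ hγode Φ hΦ0 hΦode hhyp c a b haper hbper haode hbode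
end

section
/- Let E be a finite-dimensional real inner product space, n ∈ E a unit vector, and F : E → E a C² vector field. Define the sliding vector field G(x) := F(x) − ⟨n, F(x)⟩ n (the tangential projection of F along the unit normal n). Fix x₀ with ⟨n, x₀⟩ = 0 and ⟨n, F(x₀)⟩ < 0. Let t₁ > 0, let y : [0, t₁] → E satisfy y(0) = x₀ and y'(t) = G(y(t)) for all t ∈ [0, t₁], and for each ε > 0 let x_ε : [0, t₁] → E satisfy x_ε(0) = x₀ + ε n and x_ε'(t) = F(x_ε(t)) for all t ∈ [0, t₁]. Then there exist constants C > 0 and δ > 0 and a function τ : (0, δ) → (0, t₁] such that for every ε ∈ (0, δ): ⟨n, x_ε(τ(ε))⟩ = 0, τ(ε) ≤ C ε, and ‖x_ε(τ(ε)) − y(τ(ε))‖ ≤ C ε². -/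
open scoped RealInnerProductSpace NNReal
open Set Metric Filter Topology

/-!
Near `x₀` the normal speed `⟪n, F⟫` stays below some `-c < 0`, so `⟪n, x_ε⟫` decreases from `ε`
at rate at least `c` and vanishes at some time `τ ≤ ε / c`, while the sliding trajectory never
leaves the hyperplane. Up to time `τ` the two trajectories stay `O(ε)` apart. Writing `P` for
the orthogonal projection onto `n^⊥`, the sliding field is `P ∘ F`, so the tangential parts of
`x_ε` and `y` move with velocities `P (F x_ε)` and `P (F y)`, which differ by `L · O(ε)` for a
local Lipschitz constant `L` of `F`; hence the tangential parts separate by `O(ε) · τ = O(ε²)`.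
At time `τ` both points lie on the hyperplane, so their distance is that of their tangential
parts.
-/

section Tangential

variable {E : Type*} [NormedAddCommGroup E] [InnerProductSpace ℝ E] {n : E}

theorem starProjection_orthogonal_unit_singleton (hn : ‖n‖ = 1) (z : E) :
    (ℝ ∙ n)ᗮ.starProjection z = z - ⟪n, z⟫ • n := by
  rw [Submodule.starProjection_orthogonal_val, Submodule.starProjection_unit_singleton ℝ hn]

theorem inner_starProjection_orthogonal_singleton (z : E) :
    ⟪n, (ℝ ∙ n)ᗮ.starProjection z⟫ = 0 :=
  Submodule.mem_orthogonal_singleton_iff_inner_right.mp ((ℝ ∙ n)ᗮ.starProjection_apply_mem z)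

theorem starProjection_orthogonal_singleton_eq_self {z : E} (hz : ⟪n, z⟫ = 0) :
    (ℝ ∙ n)ᗮ.starProjection z = z :=
  Submodule.starProjection_eq_self_iff.mpr
    (Submodule.mem_orthogonal_singleton_iff_inner_right.mpr hz)

theorem HasDerivAt.inner_const_left {f : ℝ → E} {f' : E} {t : ℝ} (hf : HasDerivAt f f' t) :
    HasDerivAt (fun s => ⟪n, f s⟫) ⟪n, f'⟫ t :=
  (innerSL ℝ n).hasFDerivAt.comp_hasDerivAt t hf

end Tangential

theorem mapsTo_closedBall_of_norm_deriv_lt {E : Type*} [NormedAddCommGroup E] [NormedSpace ℝ E]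
    {f f' : ℝ → E} {c : E} {T r₀ r M : ℝ} (hM : 0 ≤ M)
    (hf : ∀ t ∈ Icc 0 T, HasDerivAt f (f' t) t)
    (hf' : ∀ t ∈ Icc 0 T, f t ∈ closedBall c r → ‖f' t‖ < M)
    (h0 : f 0 ∈ closedBall c r₀) (hr : r₀ + M * T ≤ r) :
    MapsTo f (Icc 0 T) (closedBall c r) := by
  have hfc : ∀ t ∈ Icc 0 T, ‖f t - c‖ ≤ r₀ + M * t := by
    refine image_norm_le_of_norm_deriv_right_lt_deriv_boundary (f := fun t => f t - c)
      (fun t ht => ((hf t ht).continuousAt.sub continuousAt_const).continuousWithinAt)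
      (fun t ht => ((hf t (Ico_subset_Icc_self ht)).sub_const c).hasDerivWithinAt)
      (by simpa [dist_eq_norm] using h0)
      (fun t => by simpa using ((hasDerivAt_id t).const_mul M).const_add r₀)
      (fun t ht heq => hf' t (Ico_subset_Icc_self ht) ?_)
    rw [mem_closedBall, dist_eq_norm, heq]
    nlinarith [ht.2]
  intro t ht
  rw [mem_closedBall, dist_eq_norm]
  nlinarith [hfc t ht, ht.2]

theorem exists_mem_Ioc_eq_zero_of_deriv_le_neg {φ φ' : ℝ → ℝ} {b c : ℝ} (hb : 0 < b)
    (hφ : ∀ t ∈ Icc 0 b, HasDerivAt φ (φ' t) t) (hφ' : ∀ t ∈ Icc 0 b, φ' t ≤ -c)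
    (h0 : 0 < φ 0) (hcb : φ 0 ≤ c * b) : ∃ τ ∈ Ioc 0 b, φ τ = 0 := by
  have hcont : ContinuousOn φ (Icc 0 b) := fun t ht => (hφ t ht).continuousAt.continuousWithinAt
  obtain ⟨ξ, hξ, hslope⟩ := exists_hasDerivAt_eq_slope φ φ' hb hcont
    (fun t ht => hφ t (Ioo_subset_Icc_self ht))
  have hφb : φ b ≤ 0 := by
    have := hφ' ξ (Ioo_subset_Icc_self hξ)
    rw [hslope, sub_zero, div_le_iff₀ hb] at this
    linarith
  exact intermediate_value_Ioc' hb.le hcont ⟨hφb, h0⟩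

theorem inner_eq_zero_of_hasDerivAt {E : Type*} [NormedAddCommGroup E] [InnerProductSpace ℝ E]
    {n : E} {y v : ℝ → E} {T : ℝ}
    (hy : ∀ t ∈ Icc 0 T, HasDerivAt y (v t) t) (hv : ∀ t ∈ Icc 0 T, ⟪n, v t⟫ = 0)
    (h0 : ⟪n, y 0⟫ = 0) : ∀ t ∈ Icc 0 T, ⟪n, y t⟫ = 0 := by
  intro t ht
  rw [← h0]
  refine constant_of_has_deriv_right_zero
    (fun s hs => (hy s hs).inner_const_left.continuousAt.continuousWithinAt)
    (fun s hs => ?_) t ht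
  simpa [hv s (Ico_subset_Icc_self hs)] using
    ((hy s (Ico_subset_Icc_self hs)).inner_const_left (n := n)).hasDerivWithinAt (s := Ici s)

theorem norm_sub_le_of_norm_deriv_le {E : Type*} [NormedAddCommGroup E] [NormedSpace ℝ E]
    {x y x' y' : ℝ → E} {T M : ℝ}
    (hx : ∀ t ∈ Icc 0 T, HasDerivAt x (x' t) t) (hy : ∀ t ∈ Icc 0 T, HasDerivAt y (y' t) t)
    (hx' : ∀ t ∈ Ico 0 T, ‖x' t‖ ≤ M) (hy' : ∀ t ∈ Ico 0 T, ‖y' t‖ ≤ M) :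
    ∀ t ∈ Icc 0 T, ‖x t - y t‖ ≤ ‖x 0 - y 0‖ + 2 * M * t := by
  intro t ht
  have hdrift := norm_image_sub_le_of_norm_deriv_le_segment' (C := 2 * M)
    (fun t ht => ((hx t ht).sub (hy t ht)).hasDerivWithinAt)
    (fun t ht => (norm_sub_le _ _).trans (by linarith [hx' t ht, hy' t ht])) t ht
  calc ‖x t - y t‖ ≤ ‖(x t - y t) - (x 0 - y 0)‖ + ‖x 0 - y 0‖ := norm_le_norm_sub_add _ _
    _ ≤ ‖x 0 - y 0‖ + 2 * M * t := by simp only [Pi.sub_apply, sub_zero] at hdrift; linarith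

section Sliding

variable {E : Type*} [NormedAddCommGroup E] [InnerProductSpace ℝ E] {n : E} {F : E → E}
  {s : Set E} {L : ℝ≥0} {x y : ℝ → E}

theorem norm_starProjection_sub_le_of_lipschitzOnWith (hFL : LipschitzOnWith L F s) {τ ρ : ℝ}
    (hτ : 0 ≤ τ) (hx : ∀ t ∈ Icc 0 τ, HasDerivAt x (F (x t)) t)
    (hy : ∀ t ∈ Icc 0 τ, HasDerivAt y ((ℝ ∙ n)ᗮ.starProjection (F (y t))) t)
    (hxs : MapsTo x (Icc 0 τ) s) (hys : MapsTo y (Icc 0 τ) s)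
    (hρ : ∀ t ∈ Icc 0 τ, ‖x t - y t‖ ≤ ρ) :
    ‖(ℝ ∙ n)ᗮ.starProjection (x τ - y τ) - (ℝ ∙ n)ᗮ.starProjection (x 0 - y 0)‖ ≤ L * ρ * τ := by
  set P := (ℝ ∙ n)ᗮ.starProjection
  have hd : ∀ t ∈ Icc 0 τ, HasDerivAt (fun t => P (x t - y t)) (P (F (x t) - F (y t))) t := by
    intro t ht
    have hPP : P (P (F (y t))) = P (F (y t)) :=
      Submodule.starProjection_eq_self_iff.mpr ((ℝ ∙ n)ᗮ.starProjection_apply_mem _)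
    exact (P.hasFDerivAt.comp_hasDerivAt t ((hx t ht).sub (hy t ht))).congr_deriv
      (by rw [map_sub, map_sub, hPP])
  have hbound : ∀ t ∈ Ico 0 τ, ‖P (F (x t) - F (y t))‖ ≤ L * ρ := fun t ht =>
    have ht' := Ico_subset_Icc_self ht
    calc ‖P (F (x t) - F (y t))‖ ≤ ‖F (x t) - F (y t)‖ := Submodule.norm_starProjection_apply_le _ _
      _ ≤ L * ‖x t - y t‖ := by
        simpa only [dist_eq_norm] using hFL.dist_le_mul _ (hxs ht') _ (hys ht')
      _ ≤ L * ρ := by gcongr; exact hρ t ht'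
  simpa using norm_image_sub_le_of_norm_deriv_le_segment' (fun t ht => (hd t ht).hasDerivWithinAt)
    hbound τ ⟨hτ, le_rfl⟩

theorem exists_return_time_of_sliding (hn : ‖n‖ = 1) {c M T ε : ℝ}
    (hFn : ∀ z ∈ s, ⟪n, F z⟫ ≤ -c) (hFM : ∀ z ∈ s, ‖F z‖ ≤ M) (hFL : LipschitzOnWith L F s)
    (hc : 0 < c) (hε : 0 < ε) (hεT : ε ≤ c * T)
    (hx : ∀ t ∈ Icc 0 T, HasDerivAt x (F (x t)) t)
    (hy : ∀ t ∈ Icc 0 T, HasDerivAt y ((ℝ ∙ n)ᗮ.starProjection (F (y t))) t)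
    (hxs : MapsTo x (Icc 0 T) s) (hys : MapsTo y (Icc 0 T) s)
    (hy0 : ⟪n, y 0⟫ = 0) (hxy0 : x 0 = y 0 + ε • n) :
    ∃ τ ∈ Ioc 0 (ε / c), ⟪n, x τ⟫ = 0 ∧ ‖x τ - y τ‖ ≤ L * (1 + 2 * M / c) * ε ^ 2 / c := by
  have hεcT : ε / c ≤ T := (div_le_iff₀' hc).mpr hεT
  obtain ⟨τ, ⟨hτ0, hτε⟩, hxτ⟩ := exists_mem_Ioc_eq_zero_of_deriv_le_neg (div_pos hε hc)
    (fun t ht => (hx t ⟨ht.1, ht.2.trans hεcT⟩).inner_const_left)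
    (fun t ht => hFn _ (hxs ⟨ht.1, ht.2.trans hεcT⟩))
    (by simp [hxy0, inner_add_right, real_inner_smul_right, hy0, hn, hε])
    (by simp [hxy0, inner_add_right, real_inner_smul_right, hy0, hn, mul_div_cancel₀ _ hc.ne'])
  have hτT : Icc 0 τ ⊆ Icc 0 T := Icc_subset_Icc_right (hτε.trans hεcT)
  have hM : 0 ≤ M := (norm_nonneg _).trans (hFM _ (hxs ⟨le_rfl, hτ0.le.trans (hτε.trans hεcT)⟩))
  have hd0 : ‖x 0 - y 0‖ = ε := by simp [hxy0, norm_smul, hn, hε.le]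
  have hdist : ∀ t ∈ Icc 0 τ, ‖x t - y t‖ ≤ (1 + 2 * M / c) * ε := fun t ht =>
    calc ‖x t - y t‖ ≤ ‖x 0 - y 0‖ + 2 * M * t :=
          norm_sub_le_of_norm_deriv_le (fun t ht => hx t (hτT ht)) (fun t ht => hy t (hτT ht))
            (fun t ht => hFM _ (hxs (hτT (Ico_subset_Icc_self ht))))
            (fun t ht => (Submodule.norm_starProjection_apply_le _ _).trans
              (hFM _ (hys (hτT (Ico_subset_Icc_self ht)))))
            t ht
      _ ≤ ε + 2 * M * (ε / c) := by rw [hd0]; gcongr; exact ht.2.trans hτε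
      _ = (1 + 2 * M / c) * ε := by ring
  have hyτ : ⟪n, y τ⟫ = 0 := inner_eq_zero_of_hasDerivAt hy
    (fun t _ => inner_starProjection_orthogonal_singleton _) hy0 τ (hτT ⟨hτ0.le, le_rfl⟩)
  have htan := norm_starProjection_sub_le_of_lipschitzOnWith hFL hτ0.le
    (fun t ht => hx t (hτT ht)) (fun t ht => hy t (hτT ht)) (hxs.mono_left hτT)
    (hys.mono_left hτT) hdist
  rw [starProjection_orthogonal_singleton_eq_self (by rw [inner_sub_right, hxτ, hyτ, sub_zero]),
    hxy0, add_sub_cancel_left, map_smul,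
    Submodule.starProjection_orthogonalComplement_singleton_eq_zero, smul_zero, sub_zero] at htan
  refine ⟨τ, ⟨hτ0, hτε⟩, hxτ, htan.trans ?_⟩
  calc L * ((1 + 2 * M / c) * ε) * τ ≤ L * ((1 + 2 * M / c) * ε) * (ε / c) := by gcongr
    _ = L * (1 + 2 * M / c) * ε ^ 2 / c := by ring

end Sliding

theorem exists_closedBall_bounds_of_inner_lt {E : Type*} [NormedAddCommGroup E]
    [InnerProductSpace ℝ E] {n x₀ : E} {F : E → E} (hF : ContDiffAt ℝ 1 F x₀) {c : ℝ}
    (hc : ⟪n, F x₀⟫ < -c) :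
    ∃ r > 0, ∃ M > 0, ∃ L : ℝ≥0, (∀ z ∈ closedBall x₀ r, ⟪n, F z⟫ ≤ -c ∧ ‖F z‖ < M) ∧
      LipschitzOnWith L F (closedBall x₀ r) := by
  obtain ⟨L, t, ht, hL⟩ := hF.exists_lipschitzOnWith
  have hinner : ∀ᶠ z in 𝓝 x₀, ⟪n, F z⟫ < -c :=
    (continuousAt_const.inner hF.continuousAt).eventually_lt continuousAt_const hc
  have hnorm : ∀ᶠ z in 𝓝 x₀, ‖F z‖ < ‖F x₀‖ + 1 :=
    hF.continuousAt.norm.eventually_lt continuousAt_const (lt_add_one _)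
  obtain ⟨r, hr, hball⟩ := nhds_basis_closedBall.mem_iff.mp (inter_mem (inter_mem ht hinner) hnorm)
  exact ⟨r, hr, ‖F x₀‖ + 1, by positivity, L,
    fun z hz => ⟨(hball hz).1.2.le, (hball hz).2⟩, hL.mono fun z hz => (hball hz).1.1⟩

theorem exists_return_time_of_mem_closedBall {E : Type*} [NormedAddCommGroup E]
    [InnerProductSpace ℝ E] {n x₀ : E} {F : E → E} {r c M t₁ : ℝ} {L : ℝ≥0} (hn : ‖n‖ = 1)
    (hr : 0 < r) (hc : 0 < c) (hM : 0 < M) (ht₁ : 0 < t₁)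
    (hball : ∀ z ∈ closedBall x₀ r, ⟪n, F z⟫ ≤ -c ∧ ‖F z‖ < M)
    (hL : LipschitzOnWith L F (closedBall x₀ r)) (hx₀ : ⟪n, x₀⟫ = 0)
    {y : ℝ → E} (hy0 : y 0 = x₀)
    (hy : ∀ t ∈ Icc 0 t₁, HasDerivAt y ((ℝ ∙ n)ᗮ.starProjection (F (y t))) t)
    {x : ℝ → ℝ → E} (hx0 : ∀ ε > 0, x ε 0 = x₀ + ε • n)
    (hx : ∀ ε > 0, ∀ t ∈ Icc 0 t₁, HasDerivAt (x ε) (F (x ε t)) t) :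
    ∃ δ > 0, ∀ ε ∈ Ioo 0 δ, ∃ τ ∈ Ioc 0 (ε / c), τ ≤ t₁ ∧ ⟪n, x ε τ⟫ = 0 ∧
      ‖x ε τ - y τ‖ ≤ L * (1 + 2 * M / c) / c * ε ^ 2 := by
  set T := min t₁ (r / (2 * M))
  have hTt₁ : Icc 0 T ⊆ Icc 0 t₁ := Icc_subset_Icc_right (min_le_left _ _)
  have hMT : M * T ≤ r / 2 := by
    have := min_le_right t₁ (r / (2 * M))
    rw [le_div_iff₀ (by positivity)] at this
    linarith
  have hyB : MapsTo y (Icc 0 T) (closedBall x₀ r) :=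
    mapsTo_closedBall_of_norm_deriv_lt hM.le (fun t ht => hy t (hTt₁ ht))
      (fun t _ hz => (Submodule.norm_starProjection_apply_le _ _).trans_lt (hball _ hz).2)
      (by simp [hy0]) (by linarith : 0 + M * T ≤ r)
  refine ⟨min (r / 2) (c * T), lt_min (by positivity) (by positivity), ?_⟩
  rintro ε ⟨hε, hεδ⟩
  have hxB : MapsTo (x ε) (Icc 0 T) (closedBall x₀ r) :=
    mapsTo_closedBall_of_norm_deriv_lt hM.le (fun t ht => hx ε hε t (hTt₁ ht))
      (fun t _ hz => (hball _ hz).2) (r₀ := ε) (by simp [hx0 ε hε, norm_smul, hn, abs_of_pos hε])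
      (by linarith [(lt_min_iff.mp hεδ).1])
  obtain ⟨τ, ⟨hτ0, hτε⟩, hxτ, hdist⟩ := exists_return_time_of_sliding hn
    (fun z hz => (hball z hz).1) (fun z hz => (hball z hz).2.le) hL hc hε
    (lt_min_iff.mp hεδ).2.le (fun t ht => hx ε hε t (hTt₁ ht)) (fun t ht => hy t (hTt₁ ht))
    hxB hyB (hy0 ▸ hx₀) (by rw [hx0 ε hε, hy0])
  have hτT : τ ≤ T := hτε.trans ((div_le_iff₀' hc).mpr (lt_min_iff.mp hεδ).2.le)
  exact ⟨τ, ⟨hτ0, hτε⟩, hτT.trans (min_le_left _ _), hxτ, by rwa [div_mul_eq_mul_div]⟩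

theorem stmt2_general {E : Type*} [NormedAddCommGroup E] [InnerProductSpace ℝ E]
    (n : E) (hn : ‖n‖ = 1) (F : E → E) (hF : ContDiff ℝ 2 F)
    (G : E → E) (hG : ∀ x, G x = F x - ⟪n, F x⟫ • n)
    (x₀ : E) (hx₀ : ⟪n, x₀⟫ = 0) (hFx₀ : ⟪n, F x₀⟫ < 0)
    (t₁ : ℝ) (ht₁ : 0 < t₁)
    (y : ℝ → E) (hy0 : y 0 = x₀)
    (hyode : ∀ t ∈ Set.Icc (0 : ℝ) t₁, HasDerivAt y (G (y t)) t)
    (x : ℝ → ℝ → E)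
    (hx0 : ∀ ε > (0 : ℝ), x ε 0 = x₀ + ε • n)
    (hxode : ∀ ε > (0 : ℝ), ∀ t ∈ Set.Icc (0 : ℝ) t₁, HasDerivAt (x ε) (F (x ε t)) t) :
    ∃ C > (0 : ℝ), ∃ δ > (0 : ℝ), ∃ τ : ℝ → ℝ,
      ∀ ε ∈ Set.Ioo (0 : ℝ) δ,
        τ ε ∈ Set.Ioc (0 : ℝ) t₁ ∧
        ⟪n, x ε (τ ε)⟫ = 0 ∧
        τ ε ≤ C * ε ∧
        ‖x ε (τ ε) - y (τ ε)‖ ≤ C * ε ^ 2 := by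
  obtain ⟨c, hc, hFc⟩ : ∃ c > 0, ⟪n, F x₀⟫ < -c := ⟨-⟪n, F x₀⟫ / 2, by linarith, by linarith⟩
  obtain ⟨r, hr, M, hM, L, hball, hL⟩ :=
    exists_closedBall_bounds_of_inner_lt (hF.contDiffAt.of_le one_le_two) hFc
  have hy : ∀ t ∈ Icc 0 t₁, HasDerivAt y ((ℝ ∙ n)ᗮ.starProjection (F (y t))) t := fun t ht => by
    rw [starProjection_orthogonal_unit_singleton hn, ← hG]
    exact hyode t ht
  obtain ⟨δ, hδ, hreturn⟩ := exists_return_time_of_mem_closedBall hn hr hc hM ht₁ hball hL hx₀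
    hy0 hy hx0 hxode
  choose! τ hτ using hreturn
  set K := L * (1 + 2 * M / c) / c
  have hK : 0 ≤ K := by positivity
  refine ⟨1 / c + K, by positivity, δ, hδ, τ, fun ε hε => ?_⟩
  obtain ⟨⟨hτ0, hτε⟩, hτt₁, hxτ, hdist⟩ := hτ ε hε
  refine ⟨⟨hτ0, hτt₁⟩, hxτ, ?_, ?_⟩
  · calc τ ε ≤ 1 / c * ε := by rwa [one_div_mul_eq_div]
      _ ≤ (1 / c + K) * ε := by gcongr; exacts [hε.1.le, le_add_of_nonneg_right hK]
  · calc ‖x ε (τ ε) - y (τ ε)‖ ≤ K * ε ^ 2 := hdist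
      _ ≤ (1 / c + K) * ε ^ 2 := by gcongr; exact le_add_of_nonneg_left (by positivity)

/-- Key flow estimate of Theorem 3.1(c): a trajectory perturbed normally off the sliding
region returns to the boundary within time `O(ε)` at a point within `O(ε²)` of the
sliding trajectory. -/
theorem stmt2 {E : Type*} [NormedAddCommGroup E] [InnerProductSpace ℝ E]
    [FiniteDimensional ℝ E]
    (n : E) (hn : ‖n‖ = 1) (F : E → E) (hF : ContDiff ℝ 2 F)
    (G : E → E) (hG : ∀ x, G x = F x - ⟪n, F x⟫ • n)
    (x₀ : E) (hx₀ : ⟪n, x₀⟫ = 0) (hFx₀ : ⟪n, F x₀⟫ < 0)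
    (t₁ : ℝ) (ht₁ : 0 < t₁)
    (y : ℝ → E) (hy0 : y 0 = x₀)
    (hyode : ∀ t ∈ Set.Icc (0 : ℝ) t₁, HasDerivAt y (G (y t)) t)
    (x : ℝ → ℝ → E)
    (hx0 : ∀ ε > (0 : ℝ), x ε 0 = x₀ + ε • n)
    (hxode : ∀ ε > (0 : ℝ), ∀ t ∈ Set.Icc (0 : ℝ) t₁, HasDerivAt (x ε) (F (x ε t)) t) :
    ∃ C > (0 : ℝ), ∃ δ > (0 : ℝ), ∃ τ : ℝ → ℝ,
      ∀ ε ∈ Set.Ioo (0 : ℝ) δ,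
        τ ε ∈ Set.Ioc (0 : ℝ) t₁ ∧
        ⟪n, x ε (τ ε)⟫ = 0 ∧
        τ ε ≤ C * ε ∧
        ‖x ε (τ ε) - y (τ ε)‖ ≤ C * ε ^ 2 :=
  stmt2_general n hn F hF G hG x₀ hx₀ hFx₀ t₁ ht₁ y hy0 hyode x hx0 hxode
end

section
/- Let E be a finite-dimensional real inner product space, n ∈ E a unit vector, and F : E → E a C¹ vector field. Fix x₀ with ⟨n, x₀⟩ = 0 and ⟨n, F(x₀)⟩ < 0. Let t₁ > 0 and for each ε > 0 let x_ε : [0, t₁] → E satisfy x_ε(0) = x₀ + ε n and x_ε'(t) = F(x_ε(t)) for all t ∈ [0, t₁]. Then there exist δ > 0 and a function τ : (0, δ) → (0, t₁] such that for every ε ∈ (0, δ): ⟨n, x_ε(t)⟩ > 0 for all 0 ≤ t < τ(ε), ⟨n, x_ε(τ(ε))⟩ = 0, and τ(ε)/ε → −1/⟨n, F(x₀)⟩ as ε → 0⁺. -/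
open scoped RealInnerProductSpace

/-!
As long as the trajectory stays in a ball around `x₀` on which `F` is `η`-close to `F x₀`, it
stays within `η t` of the straight line `x₀ + ε n + t F x₀`; a barrier argument shows that it does
so up to time `ε / (a - η)`, where `a = -⟪n, F x₀⟫ > 0`. The height `⟪n, x_ε t⟫` is then squeezed
between `ε - (a + η) t` and `ε - (a - η) t`, which pins the first hitting time between
`ε / (a + η)` and `ε / (a - η)`. Letting `η → 0` gives `τ ε / ε → 1 / a`.
-/

open Set Filter Topology Metric

theorem norm_sub_sub_smul_le_of_hasDerivWithinAt {E : Type*} [NormedAddCommGroup E]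
    [NormedSpace ℝ E] {F : E → E} {f : ℝ → E} {x₀ v : E} {r η T : ℝ} (hη : 0 ≤ η)
    (hF : ∀ y ∈ closedBall x₀ r, ‖F y - v‖ < η)
    (hf : ∀ t ∈ Icc 0 T, HasDerivWithinAt f (F (f t)) (Icc 0 T) t)
    (hr : ‖f 0 - x₀‖ + T * (‖v‖ + η) ≤ r) :
    ∀ t ∈ Icc 0 T, ‖f t - f 0 - t • v‖ ≤ η * t := by
  have hcont : ContinuousOn f (Icc 0 T) := fun t ht => (hf t ht).continuousWithinAt
  refine image_norm_le_of_norm_deriv_right_lt_deriv_boundary'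
    (f := fun t => f t - f 0 - t • v) (f' := fun t => F (f t) - v)
    ((hcont.sub continuousOn_const).sub (continuousOn_id.smul continuousOn_const)) ?_ (by simp)
    (continuousOn_const.mul continuousOn_id)
    (fun t _ => by simpa using ((hasDerivWithinAt_id t (Ici t)).const_mul η)) ?_
  · intro t ht
    have hfs := ((hf t (Ico_subset_Icc_self ht)).mono_of_mem_nhdsWithin
      (Icc_mem_nhdsGE_of_mem ht)).sub_const (f 0)
    have := hfs.sub ((hasDerivWithinAt_id t (Ici t)).smul_const v)
    rwa [one_smul] at this
  · intro t ht hnorm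
    refine hF _ ?_
    rw [mem_closedBall, dist_eq_norm]
    calc ‖f t - x₀‖ = ‖(f t - f 0 - t • v) + (f 0 - x₀) + t • v‖ := by congr 1; abel
      _ ≤ ‖f t - f 0 - t • v‖ + ‖f 0 - x₀‖ + ‖t • v‖ := norm_add₃_le
      _ = ‖f 0 - x₀‖ + t * (‖v‖ + η) := by
        rw [hnorm, norm_smul, Real.norm_of_nonneg ht.1]; ring
      _ ≤ ‖f 0 - x₀‖ + T * (‖v‖ + η) := by gcongr; exact ht.2.le
      _ ≤ r := hr

def IsFirstZero (h : ℝ → ℝ) (τ : ℝ) : Prop :=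
  0 < τ ∧ (∀ t, 0 ≤ t → t < τ → 0 < h t) ∧ h τ = 0

noncomputable def firstZero (h : ℝ → ℝ) : ℝ :=
  Classical.epsilon (IsFirstZero h)

theorem exists_isFirstZero {h : ℝ → ℝ} {S : ℝ} (hS : 0 ≤ S) (hh : ContinuousOn h (Icc 0 S))
    (h0 : 0 < h 0) (hhS : h S ≤ 0) : ∃ τ, IsFirstZero h τ := by
  set Z := Icc 0 S ∩ h ⁻¹' Iic 0
  have hZ : IsClosed Z := hh.preimage_isClosed_of_isClosed isClosed_Icc isClosed_Iic
  have hZbdd : BddBelow Z := bddBelow_Icc.mono inter_subset_left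
  obtain ⟨⟨hτ0, hτS⟩, hhτ⟩ : sInf Z ∈ Z := hZ.csInf_mem ⟨S, ⟨hS, le_rfl⟩, hhS⟩ hZbdd
  have hpos : ∀ t, 0 ≤ t → t < sInf Z → 0 < h t := fun t ht htτ =>
    not_le.1 fun hht => (csInf_le hZbdd ⟨⟨ht, htτ.le.trans hτS⟩, hht⟩).not_gt htτ
  have hτpos : 0 < sInf Z := hτ0.lt_of_ne fun h0τ => h0.not_ge (by rwa [← h0τ] at hhτ)
  refine ⟨sInf Z, hτpos, hpos, le_antisymm hhτ ?_⟩
  -- a zero on `[0, sInf Z]` lies in `Z`, so it can only be `sInf Z` itself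
  obtain ⟨s, hs, hhs⟩ := intermediate_value_Icc' hτ0 (hh.mono (Icc_subset_Icc le_rfl hτS))
    ⟨hhτ, h0.le⟩
  have : sInf Z ≤ s := csInf_le hZbdd ⟨⟨hs.1, hs.2.trans hτS⟩, hhs.le⟩
  rw [← le_antisymm hs.2 this, hhs]

section NearLinear

variable {h : ℝ → ℝ} {ε a η : ℝ}

theorem nonpos_of_abs_sub_le (hε : 0 ≤ ε) (hηa : η < a)
    (hh : ∀ t ∈ Icc 0 (ε / (a - η)), |h t - (ε - a * t)| ≤ η * t) :
    h (ε / (a - η)) ≤ 0 := by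
  have hT := (abs_le.1 (hh _ ⟨div_nonneg hε (sub_pos.2 hηa).le, le_rfl⟩)).2
  have : (a - η) * (ε / (a - η)) = ε := mul_div_cancel₀ ε (sub_pos.2 hηa).ne'
  linarith

theorem exists_isFirstZero_of_abs_sub_le (hε : 0 < ε) (hηa : η < a)
    (hcont : ContinuousOn h (Icc 0 (ε / (a - η))))
    (hh : ∀ t ∈ Icc 0 (ε / (a - η)), |h t - (ε - a * t)| ≤ η * t) : ∃ τ, IsFirstZero h τ := by
  have hT : 0 ≤ ε / (a - η) := div_nonneg hε.le (sub_pos.2 hηa).le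
  have h0 : h 0 = ε := by simpa [sub_eq_zero] using hh 0 ⟨le_rfl, hT⟩
  exact exists_isFirstZero hT hcont (h0 ▸ hε) (nonpos_of_abs_sub_le hε.le hηa hh)

theorem IsFirstZero.mem_Icc_of_abs_sub_le {τ : ℝ} (hτ : IsFirstZero h τ) (hε : 0 ≤ ε)
    (hη : 0 ≤ η) (hηa : η < a)
    (hh : ∀ t ∈ Icc 0 (ε / (a - η)), |h t - (ε - a * t)| ≤ η * t) :
    τ ∈ Icc (ε / (a + η)) (ε / (a - η)) := by
  obtain ⟨hτpos, hpos, hτ⟩ := hτ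
  have hτT : τ ≤ ε / (a - η) := not_lt.1 fun hlt =>
    (hpos _ (div_nonneg hε (sub_pos.2 hηa).le) hlt).not_ge (nonpos_of_abs_sub_le hε hηa hh)
  refine ⟨(div_le_iff₀ (by linarith)).2 ?_, hτT⟩
  have := (abs_le.1 (hh τ ⟨hτpos.le, hτT⟩)).1
  rw [hτ] at this
  linarith

end NearLinear

theorem tendsto_of_eventually_mem_Icc {α ι β : Type*} [LinearOrder β] [TopologicalSpace β]
    [OrderTopology β] {l : Filter α} {p : Filter ι} [p.NeBot] {f : α → β} {L U : ι → β} {y : β}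
    (hL : Tendsto L p (𝓝 y)) (hU : Tendsto U p (𝓝 y))
    (h : ∀ᶠ i in p, ∀ᶠ x in l, f x ∈ Icc (L i) (U i)) : Tendsto f l (𝓝 y) := by
  refine tendsto_order.2 ⟨fun b hb => ?_, fun b hb => ?_⟩
  · obtain ⟨i, hi, hLi⟩ := (h.and (hL.eventually (lt_mem_nhds hb))).exists
    filter_upwards [hi] with x hx using hLi.trans_le hx.1
  · obtain ⟨i, hi, hUi⟩ := (h.and (hU.eventually (gt_mem_nhds hb))).exists
    filter_upwards [hi] with x hx using hx.2.trans_lt hUi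

theorem eventually_abs_inner_sub_le {E : Type*} [NormedAddCommGroup E] [InnerProductSpace ℝ E]
    {n : E} (hn : ‖n‖ = 1) {F : E → E} {x₀ : E} (hF : ContinuousAt F x₀) (hx₀ : ⟪n, x₀⟫ = 0)
    {t₁ : ℝ} (ht₁ : 0 < t₁) {x : ℝ → ℝ → E} (hx0 : ∀ ε > (0 : ℝ), x ε 0 = x₀ + ε • n)
    (hxode : ∀ ε > (0 : ℝ), ∀ t ∈ Icc (0 : ℝ) t₁, HasDerivAt (x ε) (F (x ε t)) t)
    {η s : ℝ} (hη : 0 < η) :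
    ∀ᶠ ε in 𝓝[>] 0, ε / s ≤ t₁ ∧
      ∀ t ∈ Icc 0 (ε / s), |⟪n, x ε t⟫ - (ε + ⟪n, F x₀⟫ * t)| ≤ η * t := by
  obtain ⟨r, hr, hFr⟩ := nhds_basis_closedBall.eventually_iff.1
    (hF.eventually (ball_mem_nhds (F x₀) hη))
  have hsmall : ∀ᶠ ε in 𝓝[>] (0 : ℝ), ε + ε / s * (‖F x₀‖ + η) < r :=
    ((Continuous.tendsto' (by fun_prop) 0 0 (by simp)).mono_left nhdsWithin_le_nhds).eventually
      (gt_mem_nhds hr)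
  have hshort : ∀ᶠ ε in 𝓝[>] (0 : ℝ), ε / s < t₁ :=
    ((Continuous.tendsto' (by fun_prop) 0 0 (by simp)).mono_left nhdsWithin_le_nhds).eventually
      (gt_mem_nhds ht₁)
  filter_upwards [hsmall, hshort, self_mem_nhdsWithin] with ε hεr hεt₁ (hε : 0 < ε)
  refine ⟨hεt₁.le, fun t ht => ?_⟩
  have hstart : ‖x ε 0 - x₀‖ = ε := by
    rw [hx0 ε hε, add_sub_cancel_left, norm_smul, hn, mul_one, Real.norm_of_nonneg hε.le]
  have hline := norm_sub_sub_smul_le_of_hasDerivWithinAt hη.le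
    (fun _ hy => mem_ball_iff_norm.1 (hFr hy))
    (fun t ht => (hxode ε hε t ⟨ht.1, ht.2.trans hεt₁.le⟩).hasDerivWithinAt)
    (by rw [hstart]; exact hεr.le) t ht
  have hinner : ⟪n, x ε t - x ε 0 - t • F x₀⟫ = ⟪n, x ε t⟫ - (ε + ⟪n, F x₀⟫ * t) := by
    rw [inner_sub_right, inner_sub_right, real_inner_smul_right, hx0 ε hε, inner_add_right, hx₀,
      real_inner_smul_right, real_inner_self_eq_norm_sq, hn]
    ring
  calc |⟪n, x ε t⟫ - (ε + ⟪n, F x₀⟫ * t)| ≤ ‖n‖ * ‖x ε t - x ε 0 - t • F x₀‖ :=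
        hinner ▸ abs_real_inner_le_norm _ _
    _ ≤ η * t := by rwa [hn, one_mul]

theorem eventually_isFirstZero_firstZero_mem_Icc {E : Type*} [NormedAddCommGroup E]
    [InnerProductSpace ℝ E] {n : E} (hn : ‖n‖ = 1) {F : E → E} {x₀ : E} (hF : ContinuousAt F x₀)
    (hx₀ : ⟪n, x₀⟫ = 0) {t₁ : ℝ} (ht₁ : 0 < t₁) {x : ℝ → ℝ → E}
    (hx0 : ∀ ε > (0 : ℝ), x ε 0 = x₀ + ε • n)
    (hxode : ∀ ε > (0 : ℝ), ∀ t ∈ Icc (0 : ℝ) t₁, HasDerivAt (x ε) (F (x ε t)) t)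
    {a η : ℝ} (ha : ⟪n, F x₀⟫ = -a) (hη : η ∈ Ioo 0 a) :
    ∀ᶠ ε in 𝓝[>] 0, IsFirstZero (fun t => ⟪n, x ε t⟫) (firstZero fun t => ⟪n, x ε t⟫) ∧
      firstZero (fun t => ⟪n, x ε t⟫) ∈ Icc (ε / (a + η)) (ε / (a - η)) ∧ ε / (a - η) ≤ t₁ := by
  filter_upwards [eventually_abs_inner_sub_le hn hF hx₀ ht₁ hx0 hxode hη.1 (s := a - η),
    self_mem_nhdsWithin] with ε ⟨hTt₁, hnear⟩ (hε : 0 < ε)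
  have hnear' : ∀ t ∈ Icc 0 (ε / (a - η)), |⟪n, x ε t⟫ - (ε - a * t)| ≤ η * t := by
    simpa only [ha, neg_mul, ← sub_eq_add_neg] using hnear
  have hcont : ContinuousOn (fun t => ⟪n, x ε t⟫) (Icc 0 (ε / (a - η))) := fun t ht =>
    continuousWithinAt_const.inner
      (hxode ε hε t ⟨ht.1, ht.2.trans hTt₁⟩).continuousAt.continuousWithinAt
  have hfirst := Classical.epsilon_spec (exists_isFirstZero_of_abs_sub_le hε hη.2 hcont hnear')
  exact ⟨hfirst, hfirst.mem_Icc_of_abs_sub_le hε.le hη.1.le hη.2 hnear', hTt₁⟩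

theorem stmt3_general {E : Type*} [NormedAddCommGroup E] [InnerProductSpace ℝ E]
    (n : E) (hn : ‖n‖ = 1) (F : E → E) (hF : ContDiff ℝ 1 F)
    (x₀ : E) (hx₀ : ⟪n, x₀⟫ = 0) (hFx₀ : ⟪n, F x₀⟫ < 0)
    (t₁ : ℝ) (ht₁ : 0 < t₁)
    (x : ℝ → ℝ → E)
    (hx0 : ∀ ε > (0 : ℝ), x ε 0 = x₀ + ε • n)
    (hxode : ∀ ε > (0 : ℝ), ∀ t ∈ Set.Icc (0 : ℝ) t₁, HasDerivAt (x ε) (F (x ε t)) t) :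
    ∃ δ > (0 : ℝ), ∃ τ : ℝ → ℝ,
      (∀ ε ∈ Set.Ioo (0 : ℝ) δ,
        τ ε ∈ Set.Ioc (0 : ℝ) t₁ ∧
        (∀ t, 0 ≤ t → t < τ ε → 0 < ⟪n, x ε t⟫) ∧
        ⟪n, x ε (τ ε)⟫ = 0) ∧
      Filter.Tendsto (fun ε => τ ε / ε) (nhdsWithin 0 (Set.Ioi 0))
        (nhds (-1 / ⟪n, F x₀⟫)) := by
  obtain ⟨a, ha⟩ : ∃ a, ⟪n, F x₀⟫ = -a := ⟨_, (neg_neg _).symm⟩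
  have ha₀ : 0 < a := by linarith
  have hτ := fun η (hη : η ∈ Ioo 0 a) => eventually_isFirstZero_firstZero_mem_Icc hn
    hF.continuous.continuousAt hx₀ ht₁ hx0 hxode ha hη
  obtain ⟨δ, hδ, hsub⟩ :=
    mem_nhdsGT_iff_exists_Ioo_subset.1 (hτ (a / 2) ⟨half_pos ha₀, half_lt_self ha₀⟩)
  refine ⟨δ, hδ, fun ε => firstZero fun t => ⟪n, x ε t⟫, fun ε hε => ?_, ?_⟩
  · obtain ⟨⟨hpos, hbefore, hzero⟩, hbounds, hTt₁⟩ := hsub hε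
    exact ⟨⟨hpos, hbounds.2.trans hTt₁⟩, hbefore, hzero⟩
  rw [ha, neg_div_neg_eq, one_div]
  refine tendsto_of_eventually_mem_Icc (p := 𝓝[>] 0) (L := fun η => (a + η)⁻¹)
    (U := fun η => (a - η)⁻¹) ?_ ?_ ?_
  · have : ContinuousAt (fun η => (a + η)⁻¹) 0 := by fun_prop (disch := simpa using ha₀.ne')
    simpa using this.tendsto.mono_left nhdsWithin_le_nhds
  · have : ContinuousAt (fun η => (a - η)⁻¹) 0 := by fun_prop (disch := simpa using ha₀.ne')
    simpa using this.tendsto.mono_left nhdsWithin_le_nhds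
  filter_upwards [Ioo_mem_nhdsGT ha₀] with η hη
  filter_upwards [hτ η hη, self_mem_nhdsWithin] with ε ⟨_, hbounds, _⟩ (hε : 0 < ε)
  rwa [mem_Icc, le_div_iff₀ hε, div_le_iff₀ hε, inv_mul_eq_div, inv_mul_eq_div]

/-- Hitting-time asymptotic `τ(ε) = −ε/⟨n, F(x₀)⟩ + o(ε)` for the trajectory started at
height `ε` above the sliding region of a hard boundary. -/
theorem stmt3 {E : Type*} [NormedAddCommGroup E] [InnerProductSpace ℝ E]
    [FiniteDimensional ℝ E]
    (n : E) (hn : ‖n‖ = 1) (F : E → E) (hF : ContDiff ℝ 1 F)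
    (x₀ : E) (hx₀ : ⟪n, x₀⟫ = 0) (hFx₀ : ⟪n, F x₀⟫ < 0)
    (t₁ : ℝ) (ht₁ : 0 < t₁)
    (x : ℝ → ℝ → E)
    (hx0 : ∀ ε > (0 : ℝ), x ε 0 = x₀ + ε • n)
    (hxode : ∀ ε > (0 : ℝ), ∀ t ∈ Set.Icc (0 : ℝ) t₁, HasDerivAt (x ε) (F (x ε t)) t) :
    ∃ δ > (0 : ℝ), ∃ τ : ℝ → ℝ,
      (∀ ε ∈ Set.Ioo (0 : ℝ) δ,
        τ ε ∈ Set.Ioc (0 : ℝ) t₁ ∧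
        (∀ t, 0 ≤ t → t < τ ε → 0 < ⟪n, x ε t⟫) ∧
        ⟪n, x ε (τ ε)⟫ = 0) ∧
      Filter.Tendsto (fun ε => τ ε / ε) (nhdsWithin 0 (Set.Ioi 0))
        (nhds (-1 / ⟪n, F x₀⟫)) :=
  stmt3_general n hn F hF x₀ hx₀ hFx₀ t₁ ht₁ x hx0 hxode
end

section
/- Let E be a finite-dimensional real normed space. Let F : ℝ × E → E be C¹ (jointly in the parameter ε and the state x) and let u : ℝ × ℝ → E be C² (jointly in (ε, t)) with ∂u/∂t(ε, t) = F(ε, u(ε, t)) for all (ε, t). Let ν : ℝ → ℝ be C¹ with ν(0) = 1, and set ν₁ := −ν'(0). Define γ₀(t) := u(0, t) and γ₁(t) := (d/dε)|_{ε=0} u(ε, t/ν(ε)). Then γ₁ is differentiable and for every t, γ₁'(t) = D_x F(0, γ₀(t)) γ₁(t) + ν₁ • F(0, γ₀(t)) + ∂F/∂ε(0, γ₀(t)), where D_x F denotes the Fréchet derivative of F with respect to the state variable. -/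
/-!
Write `w(t) = ∂_ε u(0, t)`. Differentiating `u(ε, t / ν(ε))` at `ε = 0` by the chain rule gives
`γ₁(t) = w(t) + t ν₁ F(0, γ₀(t))`, since `∂_ε (t / ν(ε)) = t ν₁` and `∂_t u = F`. Because mixed
partial derivatives of the `C²` map `u` commute, `w' = ∂_ε ∂_t u = ∂_ε [F(ε, u(ε, t))]`, which is
`D_x F(0, γ₀) w + ∂_ε F(0, γ₀)` by the chain rule again. Differentiating the second summand of
`γ₁` with the product rule and collecting terms yields the variational equation.
-/

open Function

section PartialDerivatives

variable {𝕜 E G : Type*} [NontriviallyNormedField 𝕜]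
  [NormedAddCommGroup E] [NormedSpace 𝕜 E] [NormedAddCommGroup G] [NormedSpace 𝕜 G]

theorem HasFDerivAt.hasDerivAt_uncurry_left {f : 𝕜 → E → G} {A : 𝕜 × E →L[𝕜] G} {x : 𝕜}
    {y : E} (h : HasFDerivAt (uncurry f) A (x, y)) :
    HasDerivAt (fun x' => f x' y) (A (1, 0)) x := by
  simpa [comp_def] using h.comp_hasDerivAt x ((hasDerivAt_id x).prodMk (hasDerivAt_const x y))

theorem HasFDerivAt.hasFDerivAt_uncurry_right {E₁ : Type*} [NormedAddCommGroup E₁]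
    [NormedSpace 𝕜 E₁] {f : E₁ → E → G} {A : E₁ × E →L[𝕜] G} {x : E₁} {y : E}
    (h : HasFDerivAt (uncurry f) A (x, y)) :
    HasFDerivAt (f x) (A.comp (ContinuousLinearMap.inr 𝕜 E₁ E)) y := by
  simpa [comp_def] using h.comp y (hasFDerivAt_prodMk_right x y)

theorem hasDerivAt_uncurry_comp {f : 𝕜 → E → G} {g : 𝕜 → E} {g' : E} {x : 𝕜}
    (hf : DifferentiableAt 𝕜 (uncurry f) (x, g x)) (hg : HasDerivAt g g' x) :
    HasDerivAt (fun y => f y (g y))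
      (deriv (fun y => f y (g x)) x + fderiv 𝕜 (f x) (g x) g') x := by
  have hA := hf.hasFDerivAt
  rw [hA.hasDerivAt_uncurry_left.deriv, hA.hasFDerivAt_uncurry_right.fderiv]
  convert hA.comp_hasDerivAt x ((hasDerivAt_id x).prodMk hg) using 1
  · rfl
  rw [ContinuousLinearMap.comp_apply, ContinuousLinearMap.inr_apply, ← map_add, Prod.mk_add_mk,
    add_zero, zero_add]

theorem hasDerivAt_deriv_swap [IsRCLikeNormedField 𝕜] {u : 𝕜 → 𝕜 → G}
    (hu : ContDiff 𝕜 2 (uncurry u)) (x y : 𝕜) :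
    HasDerivAt (fun y' => deriv (fun x' => u x' y') x) (deriv (fun x' => deriv (u x') y) x) y := by
  set A := fderiv 𝕜 (uncurry u)
  have hA : ∀ p, HasFDerivAt (uncurry u) (A p) p := fun p =>
    (hu.differentiable two_ne_zero p).hasFDerivAt
  have hB : HasFDerivAt (uncurry fun a b => A (a, b)) (fderiv 𝕜 A (x, y)) (x, y) :=
    ((hu.fderiv_right (m := 1) (by norm_num)).differentiable one_ne_zero (x, y)).hasFDerivAt
  have hleft : (fun y' => deriv (fun x' => u x' y') x) = fun y' => A (x, y') (1, 0) :=
    funext fun y' => (hA (x, y')).hasDerivAt_uncurry_left.deriv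
  have hright : (fun x' => deriv (u x') y) = fun x' => A (x', y) (0, 1) :=
    funext fun x' => by simp [(hA (x', y)).hasFDerivAt_uncurry_right.hasDerivAt.deriv]
  rw [hleft, hright, (hB.hasDerivAt_uncurry_left.clm_apply (hasDerivAt_const x _)).deriv]
  convert hB.hasFDerivAt_uncurry_right.hasDerivAt.clm_apply (hasDerivAt_const y _) using 1
  simpa using second_derivative_symmetric hA hB (1, 0) (0, 1)

end PartialDerivatives

section ShapeResponse

variable {E : Type*} [NormedAddCommGroup E] [NormedSpace ℝ E]

theorem hasDerivAt_paramDeriv_of_ode {F : ℝ → E → E} {u : ℝ → ℝ → E}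
    (hu : ContDiff ℝ 2 (uncurry u)) (hode : ∀ ε t, HasDerivAt (u ε) (F ε (u ε t)) t)
    {ε₀ t : ℝ} (hF : DifferentiableAt ℝ (uncurry F) (ε₀, u ε₀ t)) :
    HasDerivAt (fun s => deriv (fun ε => u ε s) ε₀)
      (fderiv ℝ (F ε₀) (u ε₀ t) (deriv (fun ε => u ε t) ε₀)
        + deriv (fun ε => F ε (u ε₀ t)) ε₀) t := by
  have hparam : HasDerivAt (fun ε => u ε t) (deriv (fun ε => u ε t) ε₀) ε₀ :=
    (hu.differentiable two_ne_zero (ε₀, t)).hasFDerivAt.hasDerivAt_uncurry_left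
      |>.differentiableAt.hasDerivAt
  have htime : (fun ε => deriv (u ε) t) = fun ε => F ε (u ε t) :=
    funext fun ε => (hode ε t).deriv
  have := hasDerivAt_deriv_swap hu ε₀ t
  rwa [htime, (hasDerivAt_uncurry_comp hF hparam).deriv, add_comm] at this

theorem deriv_apply_div_eq {u : ℝ → ℝ → E} (hu : Differentiable ℝ (uncurry u)) {ν : ℝ → ℝ}
    (hν : DifferentiableAt ℝ ν 0) (hν0 : ν 0 = 1) (s : ℝ) :
    deriv (fun ε => u ε (s / ν ε)) 0
      = deriv (fun ε => u ε s) 0 + (s * -deriv ν 0) • deriv (u 0) s := by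
  have hτ : HasDerivAt (fun ε => s / ν ε) (s * -deriv ν 0) 0 := by
    simpa [hν0] using (hasDerivAt_const 0 s).fun_div hν.hasDerivAt (by simp [hν0])
  rw [(hasDerivAt_uncurry_comp (by simpa [hν0] using hu _) hτ).deriv, fderiv_eq_smul_deriv]
  simp [hν0]

end ShapeResponse

theorem stmt9_general {E : Type*} [NormedAddCommGroup E] [NormedSpace ℝ E]
    (F : ℝ → E → E) (hF : ContDiff ℝ 1 (Function.uncurry F))
    (u : ℝ → ℝ → E) (hu : ContDiff ℝ 2 (Function.uncurry u))
    (hode : ∀ ε t, HasDerivAt (u ε) (F ε (u ε t)) t)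
    (ν : ℝ → ℝ) (hν : ContDiff ℝ 1 ν) (hν0 : ν 0 = 1)
    (ν₁ : ℝ) (hν₁ : ν₁ = -deriv ν 0)
    (γ₀ γ₁ : ℝ → E)
    (hγ₀ : ∀ t, γ₀ t = u 0 t)
    (hγ₁ : ∀ t, γ₁ t = deriv (fun ε => u ε (t / ν ε)) 0) :
    ∀ t, HasDerivAt γ₁
      (fderiv ℝ (F 0) (γ₀ t) (γ₁ t) + ν₁ • F 0 (γ₀ t)
        + deriv (fun ε => F ε (γ₀ t)) 0) t := by
  intro t
  obtain rfl : γ₀ = u 0 := funext hγ₀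
  obtain rfl : γ₁ = fun s => deriv (fun ε => u ε (s / ν ε)) 0 := funext hγ₁
  subst hν₁
  have hFd : Differentiable ℝ (uncurry F) := hF.differentiable one_ne_zero
  have hsplit : (fun s => deriv (fun ε => u ε (s / ν ε)) 0)
      = fun s => deriv (fun ε => u ε s) 0 + (s * -deriv ν 0) • F 0 (u 0 s) := funext fun s => by
    rw [deriv_apply_div_eq (hu.differentiable two_ne_zero) (hν.differentiable one_ne_zero 0) hν0,
      (hode 0 s).deriv]
  have hparam := hasDerivAt_paramDeriv_of_ode hu hode (hFd (0, u 0 t))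
  have hdrift : HasDerivAt (fun s => F 0 (u 0 s)) (fderiv ℝ (F 0) (u 0 t) (F 0 (u 0 t))) t :=
    (hFd (0, u 0 t)).hasFDerivAt.hasFDerivAt_uncurry_right.differentiableAt.hasFDerivAt
      |>.comp_hasDerivAt t (hode 0 t)
  rw [hsplit]
  convert hparam.fun_add ((hasDerivAt_mul_const (-deriv ν 0)).fun_smul hdrift) using 1
  simp only [map_add, map_smul]
  abel

/-- Derivation of equation (2.16): the infinitesimal shape response curve
γ₁(t) = (d/dε)|₀ u(ε, t/ν(ε)) satisfies the inhomogeneous variational equation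
γ₁' = D_x F(0, γ₀(t)) γ₁ + ν₁ F(0, γ₀(t)) + ∂F/∂ε(0, γ₀(t)), where ν₁ = −ν'(0). -/
theorem stmt9 {E : Type*} [NormedAddCommGroup E] [NormedSpace ℝ E]
    [FiniteDimensional ℝ E]
    (F : ℝ → E → E) (hF : ContDiff ℝ 1 (Function.uncurry F))
    (u : ℝ → ℝ → E) (hu : ContDiff ℝ 2 (Function.uncurry u))
    (hode : ∀ ε t, HasDerivAt (u ε) (F ε (u ε t)) t)
    (ν : ℝ → ℝ) (hν : ContDiff ℝ 1 ν) (hν0 : ν 0 = 1)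
    (ν₁ : ℝ) (hν₁ : ν₁ = -deriv ν 0)
    (γ₀ γ₁ : ℝ → E)
    (hγ₀ : ∀ t, γ₀ t = u 0 t)
    (hγ₁ : ∀ t, γ₁ t = deriv (fun ε => u ε (t / ν ε)) 0) :
    ∀ t, HasDerivAt γ₁
      (fderiv ℝ (F 0) (γ₀ t) (γ₁ t) + ν₁ • F 0 (γ₀ t)
        + deriv (fun ε => F ε (γ₀ t)) 0) t :=
  stmt9_general F hF u hu hode ν hν hν0 ν₁ hν₁ γ₀ γ₁ hγ₀ hγ₁
end

section
/- Let E be a finite-dimensional real inner product space, let 𝒯 : E → ℝ be C², and let F : E → E be C¹. Assume that ⟨F(x), ∇𝒯(x)⟩ = −1 for all x ∈ E, where ∇𝒯 denotes the gradient of 𝒯. Let γ : ℝ → E satisfy γ'(t) = F(γ(t)) for all t, and define η(t) := ∇𝒯(γ(t)). Then η is differentiable and satisfies the adjoint equation η'(t) = −(DF(γ(t)))* η(t) for all t, where DF(γ(t)) is the Fréchet derivative of F at γ(t) and * denotes the Hilbert-space adjoint. -/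
/-!
Differentiating the identity `⟪F, ∇𝒯⟫ = -1` in the direction `v` gives
`⟪DF v, ∇𝒯⟫ + ⟪F, H v⟫ = 0`, where `H` is the derivative of `∇𝒯`. Since `H` is the Hessian of
`𝒯`, it is self-adjoint, so `H F = -(DF)* ∇𝒯`; and by the chain rule `H F` is exactly the
derivative of `∇𝒯 ∘ γ` along an integral curve `γ` of `F`.
-/

open scoped RealInnerProductSpace
open InnerProductSpace Filter Topology

section

variable {E : Type*} [NormedAddCommGroup E] [InnerProductSpace ℝ E] [CompleteSpace E]

theorem ContDiffAt.exists_isSelfAdjoint_hasFDerivAt_gradient {f : E → ℝ} {x : E}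
    (hf : ContDiffAt ℝ 2 f x) :
    ∃ H : E →L[ℝ] E, IsSelfAdjoint H ∧ HasFDerivAt (gradient f) H x := by
  let toPrimal : StrongDual ℝ E →L[ℝ] E :=
    (toDual ℝ E).symm.toContinuousLinearEquiv.toContinuousLinearMap
  have hf' : DifferentiableAt ℝ (fderiv ℝ f) x :=
    (hf.fderiv_right (m := 1) le_rfl).differentiableAt one_ne_zero
  refine ⟨toPrimal ∘L fderiv ℝ (fderiv ℝ f) x, ?_, toPrimal.hasFDerivAt.comp x hf'.hasFDerivAt⟩
  rw [ContinuousLinearMap.isSelfAdjoint_iff_isSymmetric]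
  intro v w
  have hsymm := (hf.isSymmSndFDerivAt (by simp)).eq w v
  simp only [toPrimal, ContinuousLinearMap.coe_coe, ContinuousLinearMap.comp_apply,
    ContinuousLinearEquiv.coe_coe, LinearIsometryEquiv.coe_toContinuousLinearEquiv]
  rw [toDual_symm_apply, real_inner_comm, toDual_symm_apply, hsymm]

theorem IsSelfAdjoint.apply_eq_neg_adjoint_of_eventually_inner_eq {F g : E → E}
    {H : E →L[ℝ] E} {x : E} {c : ℝ} (hH : IsSelfAdjoint H) (hF : DifferentiableAt ℝ F x)
    (hg : HasFDerivAt g H x) (hc : ∀ᶠ y in 𝓝 x, ⟪F y, g y⟫ = c) :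
    H (F x) = -(ContinuousLinearMap.adjoint (fderiv ℝ F x)) (g x) := by
  have hzero : HasFDerivAt (fun y => ⟪F y, g y⟫) (0 : E →L[ℝ] ℝ) x :=
    (hasFDerivAt_const c x).congr_of_eventuallyEq hc
  have hleibniz := hzero.unique (hF.hasFDerivAt.inner ℝ hg)
  apply ext_inner_right ℝ
  intro v
  have hdir := congrArg (· v) hleibniz
  simp only [zero_apply, ContinuousLinearMap.comp_apply,
    ContinuousLinearMap.prod_apply, fderivInnerCLM_apply] at hdir
  calc ⟪H (F x), v⟫ = ⟪F x, H v⟫ := hH.isSymmetric (F x) v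
    _ = -⟪fderiv ℝ F x v, g x⟫ := by linarith
    _ = -⟪(fderiv ℝ F x).adjoint (g x), v⟫ := by
      rw [ContinuousLinearMap.adjoint_inner_left, real_inner_comm]
    _ = ⟪-(fderiv ℝ F x).adjoint (g x), v⟫ := (inner_neg_left _ _).symm

end

/-- Equation (2.25): the local timing response curve η(t) = ∇𝒯(γ(t)) satisfies the
adjoint equation η' = −(DF(γ(t)))* η. -/
theorem stmt10 {E : Type*} [NormedAddCommGroup E] [InnerProductSpace ℝ E]
    [FiniteDimensional ℝ E]
    (𝒯 : E → ℝ) (h𝒯 : ContDiff ℝ 2 𝒯)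
    (F : E → E) (hF : ContDiff ℝ 1 F)
    (hunit : ∀ x : E, ⟪F x, gradient 𝒯 x⟫ = -1)
    (γ : ℝ → E) (hγ : ∀ t, HasDerivAt γ (F (γ t)) t)
    (η : ℝ → E) (hη : ∀ t, η t = gradient 𝒯 (γ t)) :
    ∀ t, HasDerivAt η (-(ContinuousLinearMap.adjoint (fderiv ℝ F (γ t))) (η t)) t := by
  intro t
  obtain ⟨H, hH, hgrad⟩ := h𝒯.contDiffAt.exists_isSelfAdjoint_hasFDerivAt_gradient (x := γ t)
  have hHF := hH.apply_eq_neg_adjoint_of_eventually_inner_eq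
    ((hF.differentiable one_ne_zero) (γ t)) hgrad (Eventually.of_forall hunit)
  rw [hη t, ← hHF, funext hη]
  exact hgrad.comp_hasDerivAt t (hγ t)
end

section
/- Let E be a finite-dimensional real inner product space, n ∈ E a unit vector, and x_out ∈ E. Let 𝒯 : E → ℝ be differentiable at x_out and vanish identically on the hyperplane {x ∈ E : ⟨n, x − x_out⟩ = 0}. Let F : E → E with ⟨n, F(x_out)⟩ ≠ 0 and ⟨F(x_out), ∇𝒯(x_out)⟩ = −1, where ∇𝒯 denotes the gradient. Then ∇𝒯(x_out) = (−1/⟨n, F(x_out)⟩) • n. -/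
/-!
Since 𝒯 vanishes on the exit hyperplane, its derivative at `x_out` kills every direction
orthogonal to `n`, so `∇𝒯(x_out) ∈ (n⊥)⊥ = ℝ n`; the normalization `⟪F, ∇𝒯⟫ = -1` fixes the scalar.
-/

open scoped RealInnerProductSpace

theorem fderiv_apply_eq_zero_of_forall_add_smul_eq {𝕜 E G : Type*} [NontriviallyNormedField 𝕜]
    [NormedAddCommGroup E] [NormedSpace 𝕜 E] [NormedAddCommGroup G] [NormedSpace 𝕜 G]
    {f : E → G} {x v : E} (hf : DifferentiableAt 𝕜 f x) (hconst : ∀ t : 𝕜, f (x + t • v) = f x) :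
    fderiv 𝕜 f x v = 0 := by
  have hline : HasDerivAt (fun t : 𝕜 => f (x + t • v)) (fderiv 𝕜 f x v) 0 :=
    hf.hasFDerivAt.hasLineDerivAt v
  simp only [hconst] at hline
  exact hline.unique (hasDerivAt_const 0 (f x))

section Gradient

variable {E : Type*} [NormedAddCommGroup E] [InnerProductSpace ℝ E] [CompleteSpace E]

theorem gradient_mem_span_singleton_of_eq_on_hyperplane {f : E → ℝ} {n x₀ : E}
    (hf : DifferentiableAt ℝ f x₀) (hconst : ∀ x, ⟪n, x - x₀⟫ = 0 → f x = f x₀) :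
    gradient f x₀ ∈ ℝ ∙ n := by
  rw [← Submodule.orthogonal_orthogonal (ℝ ∙ n)]
  intro v hv
  rw [Submodule.mem_orthogonal_singleton_iff_inner_right] at hv
  have hzero : fderiv ℝ f x₀ v = 0 :=
    fderiv_apply_eq_zero_of_forall_add_smul_eq hf fun t =>
      hconst _ (by simp [inner_smul_right, hv])
  rwa [hf.hasGradientAt.hasFDerivAt.fderiv, InnerProductSpace.toDual_apply_apply,
    real_inner_comm] at hzero

end Gradient

theorem stmt11_general {E : Type*} [NormedAddCommGroup E] [InnerProductSpace ℝ E]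
    [FiniteDimensional ℝ E]
    (n x_out : E)
    (𝒯 : E → ℝ) (hdiff : DifferentiableAt ℝ 𝒯 x_out)
    (hzero : ∀ x : E, ⟪n, x - x_out⟫ = 0 → 𝒯 x = 0)
    (F : E → E) (hF : ⟪n, F x_out⟫ ≠ 0)
    (hnorm : ⟪F x_out, gradient 𝒯 x_out⟫ = -1) :
    gradient 𝒯 x_out = (-1 / ⟪n, F x_out⟫) • n := by
  have hconst : ∀ x, ⟪n, x - x_out⟫ = 0 → 𝒯 x = 𝒯 x_out := fun x hx =>
    (hzero x hx).trans (hzero x_out (by simp)).symm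
  obtain ⟨c, hc⟩ :=
    Submodule.mem_span_singleton.mp (gradient_mem_span_singleton_of_eq_on_hyperplane hdiff hconst)
  rw [← hc, inner_smul_right, real_inner_comm, ← eq_div_iff hF] at hnorm
  rw [← hc, hnorm]

/-- Boundary condition (2.26) for the local timing response curve: if 𝒯 vanishes on the
exit hyperplane with unit normal n and F · ∇𝒯 = −1 at the exit point, then
∇𝒯(x_out) = −n/(nᵀ F(x_out)). -/
theorem stmt11 {E : Type*} [NormedAddCommGroup E] [InnerProductSpace ℝ E]
    [FiniteDimensional ℝ E]
    (n x_out : E) (hn : ‖n‖ = 1)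
    (𝒯 : E → ℝ) (hdiff : DifferentiableAt ℝ 𝒯 x_out)
    (hzero : ∀ x : E, ⟪n, x - x_out⟫ = 0 → 𝒯 x = 0)
    (F : E → E) (hF : ⟪n, F x_out⟫ ≠ 0)
    (hnorm : ⟪F x_out, gradient 𝒯 x_out⟫ = -1) :
    gradient 𝒯 x_out = (-1 / ⟪n, F x_out⟫) • n :=
  stmt11_general n x_out 𝒯 hdiff hzero F hF hnorm
end

section
/- Let E be a finite-dimensional real inner product space. Let 𝒯 : ℝ × E → ℝ be C² jointly in (ε, x) and F : ℝ × E → E be C¹ jointly, and assume ⟨F(ε, x), ∇_x 𝒯(ε, x)⟩ = −1 for all ε and x, where ∇_x denotes the gradient in the state variable. Let γ : ℝ → E satisfy γ'(t) = F(0, γ(t)) for all t, fix t_in < t_out, and assume 𝒯(ε, γ(t_out)) = 0 for all ε. Let x_in : ℝ → E be differentiable at 0 with x_in(0) = γ(t_in). Then the function ε ↦ 𝒯(ε, x_in(ε)) is differentiable at ε = 0 with derivative ⟨∇_x 𝒯(0, γ(t_in)), x_in'(0)⟩ + ∫_{t_in}^{t_out} ⟨∂F/∂ε(0, γ(t)),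 ∇_x 𝒯(0, γ(t))⟩ dt. -/
open scoped RealInnerProductSpace

/-!
Write `G = uncurry 𝒯` and `φ x = ∂_ε G(0, x)`. By the chain rule the derivative of
`ε ↦ 𝒯 ε (x_in ε)` at `0` is `φ(γ t_in) + ⟪∇𝒯₀(γ t_in), x_in'(0)⟫`. Differentiating the
identity `∂_x G(ε, x)[F ε x] = -1` in `ε` and using the symmetry of the second derivative of
`G` gives `∂_x φ(x)[F 0 x] = -∂_x G(0, x)[∂_ε F(0, x)]`, so along the trajectory `γ` the
function `t ↦ φ(γ t)` has derivative `-⟪∂_ε F(0, γ t), ∇𝒯₀(γ t)⟫`. Since `𝒯 ε` vanishes at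
`γ t_out` for every `ε`, `φ(γ t_out) = 0`, and the fundamental theorem of calculus gives
`φ(γ t_in)` as the integral in the statement.
-/

section PartialDerivatives

variable {𝕜 E V : Type*} [NontriviallyNormedField 𝕜] [NormedAddCommGroup E] [NormedSpace 𝕜 E]
  [NormedAddCommGroup V] [NormedSpace 𝕜 V] {g : 𝕜 × E → V} {a : 𝕜} {x : E}

theorem DifferentiableAt.hasDerivAt_comp_prodMk_left (h : DifferentiableAt 𝕜 g (a, x)) :
    HasDerivAt (fun ε => g (ε, x)) (fderiv 𝕜 g (a, x) (1, 0)) a :=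
  h.hasFDerivAt.comp_hasDerivAt a ((hasDerivAt_id a).prodMk (hasDerivAt_const a x))

theorem DifferentiableAt.fderiv_comp_prodMk_right (h : DifferentiableAt 𝕜 g (a, x)) (v : E) :
    fderiv 𝕜 (fun y => g (a, y)) x v = fderiv 𝕜 g (a, x) (0, v) :=
  congrArg (fun L => L v) (h.hasFDerivAt.comp x (hasFDerivAt_prodMk_right a x)).fderiv

end PartialDerivatives

section TransitTime

variable {E : Type*} [NormedAddCommGroup E] [NormedSpace ℝ E]
  {G : ℝ × E → ℝ} {F : ℝ → E → E} {c ε₀ : ℝ}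

theorem fderiv_fderiv_apply_field_time_eq_neg {x : E} (hG : ContDiffAt ℝ 2 G (ε₀, x))
    (hF : DifferentiableAt ℝ (fun ε => F ε x) ε₀)
    (hconst : ∀ ε, fderiv ℝ G (ε, x) (0, F ε x) = c) :
    fderiv ℝ (fderiv ℝ G) (ε₀, x) (0, F ε₀ x) (1, 0) =
      -fderiv ℝ G (ε₀, x) (0, deriv (fun ε => F ε x) ε₀) := by
  have hDG : HasDerivAt (fun ε => fderiv ℝ G (ε, x)) (fderiv ℝ (fderiv ℝ G) (ε₀, x) (1, 0)) ε₀ :=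
    ((hG.fderiv_right le_rfl).differentiableAt one_ne_zero).hasDerivAt_comp_prodMk_left
  have hfield : HasDerivAt (fun ε => ((0 : ℝ), F ε x)) (0, deriv (fun ε => F ε x) ε₀) ε₀ :=
    (hasDerivAt_const ε₀ 0).prodMk hF.hasDerivAt
  have hzero := (hDG.clm_apply hfield).unique <| by
    simpa only [hconst] using hasDerivAt_const ε₀ c
  rw [hG.isSymmSndFDerivAt (by simp [minSmoothness_of_isRCLikeNormedField])]
  linarith

theorem hasDerivAt_fderiv_time_along_trajectory {γ : ℝ → E} {t : ℝ}
    (hG : ContDiffAt ℝ 2 G (ε₀, γ t)) (hF : DifferentiableAt ℝ (fun ε => F ε (γ t)) ε₀)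
    (hconst : ∀ ε, fderiv ℝ G (ε, γ t) (0, F ε (γ t)) = c)
    (hγ : HasDerivAt γ (F ε₀ (γ t)) t) :
    HasDerivAt (fun s => fderiv ℝ G (ε₀, γ s) (1, 0))
      (-fderiv ℝ G (ε₀, γ t) (0, deriv (fun ε => F ε (γ t)) ε₀)) t := by
  have hDG : HasDerivAt (fun s => fderiv ℝ G (ε₀, γ s))
      (fderiv ℝ (fderiv ℝ G) (ε₀, γ t) (0, F ε₀ (γ t))) t :=
    ((hG.fderiv_right le_rfl).differentiableAt one_ne_zero).hasFDerivAt.comp_hasDerivAt t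
      ((hasDerivAt_const t ε₀).prodMk hγ)
  simpa [fderiv_fderiv_apply_field_time_eq_neg hG hF hconst] using
    hDG.clm_apply (hasDerivAt_const t ((1 : ℝ), (0 : E)))

theorem fderiv_time_eq_add_integral_along_trajectory {γ : ℝ → E} (hG : ContDiff ℝ 2 G)
    (hF : ContDiff ℝ 1 (Function.uncurry F))
    (hconst : ∀ ε x, fderiv ℝ G (ε, x) (0, F ε x) = c)
    (hγ : ∀ t, HasDerivAt γ (F ε₀ (γ t)) t) (a b : ℝ) :
    fderiv ℝ G (ε₀, γ a) (1, 0) = fderiv ℝ G (ε₀, γ b) (1, 0) +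
      ∫ t in a..b, fderiv ℝ G (ε₀, γ t) (0, deriv (fun ε => F ε (γ t)) ε₀) := by
  have hFdiff : Differentiable ℝ (Function.uncurry F) := hF.differentiable one_ne_zero
  have hderivF : ∀ y, deriv (fun ε => F ε y) ε₀ = fderiv ℝ (Function.uncurry F) (ε₀, y) (1, 0) :=
    fun y => (hFdiff (ε₀, y)).hasDerivAt_comp_prodMk_left.deriv
  have hγc : Continuous γ := continuous_iff_continuousAt.2 fun t => (hγ t).continuousAt
  have hcont : Continuous fun t => fderiv ℝ G (ε₀, γ t) (0, deriv (fun ε => F ε (γ t)) ε₀) := by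
    simp only [hderivF]
    have hDG := hG.continuous_fderiv two_ne_zero
    have hDF := hF.continuous_fderiv one_ne_zero
    fun_prop
  have hFTC := intervalIntegral.integral_eq_sub_of_hasDerivAt
    (fun t _ => hasDerivAt_fderiv_time_along_trajectory hG.contDiffAt
      (hFdiff (ε₀, γ t)).hasDerivAt_comp_prodMk_left.differentiableAt (hconst · (γ t)) (hγ t))
    (hcont.neg.intervalIntegrable a b)
  rw [intervalIntegral.integral_neg] at hFTC
  linarith

end TransitTime

theorem stmt12_general {E : Type*} [NormedAddCommGroup E] [InnerProductSpace ℝ E]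
    [FiniteDimensional ℝ E]
    (𝒯 : ℝ → E → ℝ) (h𝒯 : ContDiff ℝ 2 (Function.uncurry 𝒯))
    (F : ℝ → E → E) (hF : ContDiff ℝ 1 (Function.uncurry F))
    (hunit : ∀ (ε : ℝ) (x : E), ⟪F ε x, gradient (𝒯 ε) x⟫ = -1)
    (γ : ℝ → E) (hγ : ∀ t, HasDerivAt γ (F 0 (γ t)) t)
    (t_in t_out : ℝ)
    (hexit : ∀ ε : ℝ, 𝒯 ε (γ t_out) = 0)
    (x_in : ℝ → E) (hx_in : DifferentiableAt ℝ x_in 0)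
    (hx_in0 : x_in 0 = γ t_in) :
    HasDerivAt (fun ε => 𝒯 ε (x_in ε))
      (⟪gradient (𝒯 0) (γ t_in), deriv x_in 0⟫ +
        ∫ t in t_in..t_out, ⟪deriv (fun ε => F ε (γ t)) 0, gradient (𝒯 0) (γ t)⟫) 0 := by
  have hdiff : Differentiable ℝ (Function.uncurry 𝒯) := h𝒯.differentiable two_ne_zero
  have hpartial (ε : ℝ) (x v : E) :
      ⟪gradient (𝒯 ε) x, v⟫ = fderiv ℝ (Function.uncurry 𝒯) (ε, x) (0, v) := by
    rw [inner_gradient_left]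
    exact (hdiff (ε, x)).fderiv_comp_prodMk_right v
  have hexit' : fderiv ℝ (Function.uncurry 𝒯) (0, γ t_out) (1, 0) = 0 := by
    simpa [hexit] using ((hdiff (0, γ t_out)).hasDerivAt_comp_prodMk_left).deriv.symm
  have hchain : HasDerivAt (fun ε => 𝒯 ε (x_in ε))
      (fderiv ℝ (Function.uncurry 𝒯) (0, x_in 0) ((1, 0) + (0, deriv x_in 0))) 0 := by
    rw [Prod.mk_add_mk, add_zero, zero_add]
    exact (hdiff _).hasFDerivAt.comp_hasDerivAt 0 ((hasDerivAt_id 0).prodMk hx_in.hasDerivAt)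
  rw [map_add, hx_in0, fderiv_time_eq_add_integral_along_trajectory h𝒯 hF
    (fun ε x => (hpartial ε x (F ε x)).symm.trans ((real_inner_comm _ _).trans (hunit ε x))) hγ t_in t_out, hexit'] at hchain
  simpa only [real_inner_comm (gradient _ _), hpartial, zero_add, add_comm] using hchain

/-- Equation (2.24): the linear shift in transit time through a region is
T₁ = η(x_in) · ∂x_in/∂ε|₀ + ∫ η · ∂F_ε/∂ε|₀ dt, where η = ∇_x 𝒯(0, ·) is the
local timing response curve and T_ε = 𝒯(ε, x_in(ε)) the perturbed transit time. -/
theorem stmt12 {E : Type*} [NormedAddCommGroup E] [InnerProductSpace ℝ E]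
    [FiniteDimensional ℝ E]
    (𝒯 : ℝ → E → ℝ) (h𝒯 : ContDiff ℝ 2 (Function.uncurry 𝒯))
    (F : ℝ → E → E) (hF : ContDiff ℝ 1 (Function.uncurry F))
    (hunit : ∀ (ε : ℝ) (x : E), ⟪F ε x, gradient (𝒯 ε) x⟫ = -1)
    (γ : ℝ → E) (hγ : ∀ t, HasDerivAt γ (F 0 (γ t)) t)
    (t_in t_out : ℝ) (hlt : t_in < t_out)
    (hexit : ∀ ε : ℝ, 𝒯 ε (γ t_out) = 0)
    (x_in : ℝ → E) (hx_in : DifferentiableAt ℝ x_in 0)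
    (hx_in0 : x_in 0 = γ t_in) :
    HasDerivAt (fun ε => 𝒯 ε (x_in ε))
      (⟪gradient (𝒯 0) (γ t_in), deriv x_in 0⟫ +
        ∫ t in t_in..t_out, ⟪deriv (fun ε => F ε (γ t)) 0, gradient (𝒯 0) (γ t)⟫) 0 :=
  stmt12_general 𝒯 h𝒯 F hF hunit γ hγ t_in t_out hexit x_in hx_in hx_in0
end

section
/- Let E be a finite-dimensional real inner product space. Let 𝒯 : ℝ × E → ℝ be C² jointly in (ε, x) and F : ℝ × E → E be C¹ jointly, and assume ⟨F(ε, x), ∇_x 𝒯(ε, x)⟩ = −1 for all ε and x, where ∇_x denotes the gradient in the state variable. Let γ : ℝ → E satisfy γ'(t) = F(0, γ(t)) for all t, fix t_in < t_out, and assume 𝒯(ε, γ(t_out)) = 0 for all ε. Then (∂𝒯/∂ε)(0, γ(t_in)) = ∫_{t_in}^{t_out} ⟨∂F/∂ε(0, γ(t)), ∇_x 𝒯(0, γ(t))⟩ dt. -/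
/-! Along `γ`, put `u t = ∂_ε 𝒯(0, γ t)`. By symmetry of the second derivative of `𝒯`, `u' t` is
the `ε`-derivative of `⟪F 0 x, ∇ 𝒯(ε, x)⟫` at `x = γ t`; differentiating the identity
`⟪F ε x, ∇ 𝒯(ε, x)⟫ = -1` in `ε` shows that this equals `-⟪∂_ε F(0, x), ∇ 𝒯(0, x)⟫`. As
`𝒯(·, γ t_out) ≡ 0` gives `u t_out = 0`, the fundamental theorem of calculus yields the identity. -/
open scoped RealInnerProductSpace

open Function

section Partial

variable {𝕜 : Type*} [NontriviallyNormedField 𝕜] {E G : Type*}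
  [NormedAddCommGroup E] [NormedSpace 𝕜 E] [NormedAddCommGroup G] [NormedSpace 𝕜 G]

theorem hasDerivAt_prodMk_left (a : 𝕜) (x : E) :
    HasDerivAt (fun ε => (ε, x)) ((1 : 𝕜), (0 : E)) a :=
  (hasDerivAt_id a).prodMk (hasDerivAt_const a x)

theorem DifferentiableAt.hasDerivAt_uncurry_left {f : 𝕜 → E → G} {a : 𝕜} {x : E}
    (hf : DifferentiableAt 𝕜 (uncurry f) (a, x)) :
    HasDerivAt (fun ε => f ε x) (fderiv 𝕜 (uncurry f) (a, x) (1, 0)) a :=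
  hf.hasFDerivAt.comp_hasDerivAt (l := uncurry f) a (hasDerivAt_prodMk_left a x)

theorem DifferentiableAt.fderiv_uncurry_right {f : 𝕜 → E → G} {a : 𝕜} {x : E}
    (hf : DifferentiableAt 𝕜 (uncurry f) (a, x)) (v : E) :
    fderiv 𝕜 (f a) x v = fderiv 𝕜 (uncurry f) (a, x) (0, v) := by
  have h : HasFDerivAt (f a) ((fderiv 𝕜 (uncurry f) (a, x)).comp (.inr 𝕜 𝕜 E)) x :=
    hf.hasFDerivAt.comp x (hasFDerivAt_prodMk_right a x)
  rw [h.fderiv]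
  rfl

theorem hasDerivAt_fderiv_apply_left_along {g : 𝕜 × E → G} {a t : 𝕜} {γ : 𝕜 → E} {v : E}
    (hg : DifferentiableAt 𝕜 (fderiv 𝕜 g) (a, γ t)) (hsymm : IsSymmSndFDerivAt 𝕜 g (a, γ t))
    (hγ : HasDerivAt γ v t) :
    HasDerivAt (fun s => fderiv 𝕜 g (a, γ s) (1, 0))
      (fderiv 𝕜 (fderiv 𝕜 g) (a, γ t) (1, 0) (0, v)) t := by
  have hcurve : HasDerivAt (fun s => (a, γ s)) (0, v) t := (hasDerivAt_const t a).prodMk hγ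
  have := (hg.hasFDerivAt.comp_hasDerivAt (l := fderiv 𝕜 g) t hcurve).clm_apply
    (hasDerivAt_const t ((1 : 𝕜), (0 : E)))
  simpa [hsymm (0, v)] using this

theorem fderiv_fderiv_apply_eq_neg_of_const {g : 𝕜 × E → G} {w : 𝕜 → E} {w' : E} {a : 𝕜}
    {x : E} {c : G} (hg : DifferentiableAt 𝕜 (fderiv 𝕜 g) (a, x)) (hw : HasDerivAt w w' a)
    (hc : ∀ ε, fderiv 𝕜 g (ε, x) (0, w ε) = c) :
    fderiv 𝕜 (fderiv 𝕜 g) (a, x) (1, 0) (0, w a) = -fderiv 𝕜 g (a, x) (0, w') := by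
  have hw0 : HasDerivAt (fun ε => ((0 : 𝕜), w ε)) (0, w') a := (hasDerivAt_const a 0).prodMk hw
  have hd := (hg.hasFDerivAt.comp_hasDerivAt (l := fderiv 𝕜 g) a
    (hasDerivAt_prodMk_left a x)).clm_apply hw0
  simp only [comp_def, hc] at hd
  exact eq_neg_of_add_eq_zero_left (hd.unique (hasDerivAt_const a c))

end Partial

section TimeRemaining

variable {E : Type*} [NormedAddCommGroup E] [InnerProductSpace ℝ E] [CompleteSpace E]

theorem DifferentiableAt.inner_gradient_uncurry {𝒯 : ℝ → E → ℝ} {ε : ℝ} {x : E}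
    (h𝒯 : DifferentiableAt ℝ (uncurry 𝒯) (ε, x)) (v : E) :
    ⟪v, gradient (𝒯 ε) x⟫ = fderiv ℝ (uncurry 𝒯) (ε, x) (0, v) := by
  rw [inner_gradient_right, conj_trivial, h𝒯.fderiv_uncurry_right]

theorem hasDerivAt_deriv_uncurry_left_along_flow {𝒯 : ℝ → E → ℝ} {F : ℝ → E → E} {γ : ℝ → E}
    {t : ℝ} (h𝒯 : ContDiff ℝ 2 (uncurry 𝒯)) (hF : Differentiable ℝ (uncurry F))
    (hunit : ∀ ε x, ⟪F ε x, gradient (𝒯 ε) x⟫ = -1) (hγ : HasDerivAt γ (F 0 (γ t)) t) :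
    HasDerivAt (fun s => deriv (fun ε => 𝒯 ε (γ s)) 0)
      (-fderiv ℝ (uncurry 𝒯) (0, γ t) (0, fderiv ℝ (uncurry F) (0, γ t) (1, 0))) t := by
  have hd : Differentiable ℝ (uncurry 𝒯) := h𝒯.differentiable two_ne_zero
  have hd2 : Differentiable ℝ (fderiv ℝ (uncurry 𝒯)) :=
    (h𝒯.fderiv_right le_rfl).differentiable one_ne_zero
  have hu : (fun s => deriv (fun ε => 𝒯 ε (γ s)) 0) =
      fun s => fderiv ℝ (uncurry 𝒯) (0, γ s) (1, 0) :=
    funext fun s => (hd _).hasDerivAt_uncurry_left.deriv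
  have hunit' : ∀ ε, fderiv ℝ (uncurry 𝒯) (ε, γ t) (0, F ε (γ t)) = -1 := fun ε => by
    rw [← (hd _).inner_gradient_uncurry, hunit]
  rw [hu, ← fderiv_fderiv_apply_eq_neg_of_const (hd2 _) (hF _).hasDerivAt_uncurry_left hunit']
  exact hasDerivAt_fderiv_apply_left_along (hd2 _)
    (h𝒯.contDiffAt.isSymmSndFDerivAt (by simp)) hγ

end TimeRemaining

theorem stmt13_general {E : Type*} [NormedAddCommGroup E] [InnerProductSpace ℝ E]
    [FiniteDimensional ℝ E]
    (𝒯 : ℝ → E → ℝ) (h𝒯 : ContDiff ℝ 2 (Function.uncurry 𝒯))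
    (F : ℝ → E → E) (hF : ContDiff ℝ 1 (Function.uncurry F))
    (hunit : ∀ (ε : ℝ) (x : E), ⟪F ε x, gradient (𝒯 ε) x⟫ = -1)
    (γ : ℝ → E) (hγ : ∀ t, HasDerivAt γ (F 0 (γ t)) t)
    (t_in t_out : ℝ)
    (hexit : ∀ ε : ℝ, 𝒯 ε (γ t_out) = 0) :
    deriv (fun ε => 𝒯 ε (γ t_in)) 0 =
      ∫ t in t_in..t_out, ⟪deriv (fun ε => F ε (γ t)) 0, gradient (𝒯 0) (γ t)⟫ := by
  have hd : Differentiable ℝ (uncurry 𝒯) := h𝒯.differentiable two_ne_zero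
  have hFd : Differentiable ℝ (uncurry F) := hF.differentiable one_ne_zero
  have hintegrand : (fun t => ⟪deriv (fun ε => F ε (γ t)) 0, gradient (𝒯 0) (γ t)⟫) =
      fun t => fderiv ℝ (uncurry 𝒯) (0, γ t) (0, fderiv ℝ (uncurry F) (0, γ t) (1, 0)) := by
    funext t
    rw [(hFd _).hasDerivAt_uncurry_left.deriv, (hd _).inner_gradient_uncurry]
  have hγc : Continuous γ := continuous_iff_continuousAt.2 fun t => (hγ t).continuousAt
  have hcont : Continuous fun t =>
      fderiv ℝ (uncurry 𝒯) (0, γ t) (0, fderiv ℝ (uncurry F) (0, γ t) (1, 0)) := by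
    have h𝒯' := h𝒯.continuous_fderiv two_ne_zero
    have hF' := hF.continuous_fderiv one_ne_zero
    fun_prop
  rw [hintegrand, intervalIntegral.integral_eq_sub_of_hasDerivAt
    (f := -fun s => deriv (fun ε => 𝒯 ε (γ s)) 0)
    (fun t _ => by
      simpa only [neg_neg] using
        (hasDerivAt_deriv_uncurry_left_along_flow h𝒯 hFd hunit (hγ t)).neg)
    (hcont.intervalIntegrable _ _)]
  simp [hexit]

/-- Identity (C.13): 𝒯₁(x_in) = ∫_{t_in}^{t_out} F₁(γ(t)) · η₀(γ(t)) dt, where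
F₁ = ∂F_ε/∂ε|₀ and 𝒯₁ = ∂𝒯_ε/∂ε|₀ and η₀ = ∇_x 𝒯(0, ·). -/
theorem stmt13 {E : Type*} [NormedAddCommGroup E] [InnerProductSpace ℝ E]
    [FiniteDimensional ℝ E]
    (𝒯 : ℝ → E → ℝ) (h𝒯 : ContDiff ℝ 2 (Function.uncurry 𝒯))
    (F : ℝ → E → E) (hF : ContDiff ℝ 1 (Function.uncurry F))
    (hunit : ∀ (ε : ℝ) (x : E), ⟪F ε x, gradient (𝒯 ε) x⟫ = -1)
    (γ : ℝ → E) (hγ : ∀ t, HasDerivAt γ (F 0 (γ t)) t)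
    (t_in t_out : ℝ) (hlt : t_in < t_out)
    (hexit : ∀ ε : ℝ, 𝒯 ε (γ t_out) = 0) :
    deriv (fun ε => 𝒯 ε (γ t_in)) 0 =
      ∫ t in t_in..t_out, ⟪deriv (fun ε => F ε (γ t)) 0, gradient (𝒯 0) (γ t)⟫ :=
  stmt13_general 𝒯 h𝒯 F hF hunit γ hγ t_in t_out hexit
end

section
/- Let α > 0 and let x, y : ℝ → ℝ be differentiable functions satisfying x'(t) = α x(t) − y(t) and y'(t) = x(t) + α y(t) for all t ≥ 0 (the interior vector field of the planar model). Assume (x(0), y(0)) ≠ (0, 0) and x(0)² + y(0)² ≤ 2. Then there exists t ∈ [0, (1/(2α)) · log(2/(x(0)² + y(0)²))] such that max(|x(t)|, |y(t)|) ≥ 1; i.e., the trajectory reaches the boundary of the square [−1, 1] × [−1, 1] within that time. -/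
/-!
The squared radius `ρ = x² + y²` satisfies `ρ' = 2αρ`, hence `ρ(t) = ρ(0) e^{2αt}`, which
equals `2` exactly at the stated time. Every point of the open square has `x² + y² < 2`, so at
that time the trajectory has left it.
-/

open Real

theorem eq_exp_smul_of_hasDerivAt_smul_self {E : Type*} [NormedAddCommGroup E] [NormedSpace ℝ E]
    {c : ℝ} {r : ℝ → E} (hr : ∀ t, 0 ≤ t → HasDerivAt r (c • r t) t) {t : ℝ} (ht : 0 ≤ t) :
    r t = exp (c * t) • r 0 := by
  set f : ℝ → E := fun s => exp (-c * s) • r s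
  have hf : ∀ s, 0 ≤ s → HasDerivAt f 0 s := by
    intro s hs
    have hexp : HasDerivAt (fun s => exp (-c * s)) (exp (-c * s) * -c) s := by
      simpa using ((hasDerivAt_id s).const_mul (-c)).exp
    refine (hexp.smul (hr s hs)).congr_deriv ?_
    rw [smul_smul, mul_neg, neg_smul, add_neg_cancel]
  have hconst : f t = f 0 :=
    constant_of_has_deriv_right_zero (fun s hs => (hf s hs.1).continuousAt.continuousWithinAt)
      (fun s hs => (hf s hs.1).hasDerivWithinAt) t ⟨ht, le_rfl⟩
  simp only [f, mul_zero, exp_zero, one_smul] at hconst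
  rw [← hconst, smul_smul, ← exp_add]
  simp

theorem hasDerivAt_sq_add_sq_of_spiral {α t : ℝ} {x y : ℝ → ℝ}
    (hx : HasDerivAt x (α * x t - y t) t) (hy : HasDerivAt y (x t + α * y t) t) :
    HasDerivAt (fun s => x s ^ 2 + y s ^ 2) ((2 * α) • (x t ^ 2 + y t ^ 2)) t := by
  refine ((hx.pow 2).add (hy.pow 2)).congr_deriv ?_
  simp only [smul_eq_mul, Nat.cast_ofNat]
  ring

theorem one_le_max_abs_of_two_le_sq_add_sq {a b : ℝ} (h : 2 ≤ a ^ 2 + b ^ 2) :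
    1 ≤ max |a| |b| := by
  by_contra! hlt
  have ha : a ^ 2 < 1 := (sq_lt_one_iff_abs_lt_one a).2 (le_max_left _ _ |>.trans_lt hlt)
  have hb : b ^ 2 < 1 := (sq_lt_one_iff_abs_lt_one b).2 (le_max_right _ _ |>.trans_lt hlt)
  linarith

/-- Every nonzero trajectory of the spiral source dx/dt = αx − y, dy/dt = x + αy starting
in the disk x₀² + y₀² ≤ 2 reaches the boundary of the square [−1,1]² within time
(1/(2α)) log(2/(x₀² + y₀²)). -/
theorem stmt16 (α : ℝ) (hα : 0 < α) (x y : ℝ → ℝ)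
    (hx : ∀ t : ℝ, 0 ≤ t → HasDerivAt x (α * x t - y t) t)
    (hy : ∀ t : ℝ, 0 ≤ t → HasDerivAt y (x t + α * y t) t)
    (h0 : (x 0, y 0) ≠ (0, 0))
    (hdisk : x 0 ^ 2 + y 0 ^ 2 ≤ 2) :
    ∃ t ∈ Set.Icc (0 : ℝ) ((1 / (2 * α)) * Real.log (2 / (x 0 ^ 2 + y 0 ^ 2))),
      1 ≤ max |x t| |y t| := by
  set r₀ := x 0 ^ 2 + y 0 ^ 2
  have hr₀ : 0 < r₀ := by
    have : x 0 ≠ 0 ∨ y 0 ≠ 0 := by simpa [or_iff_not_imp_left] using h0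
    rcases this with h | h <;> positivity
  set T := 1 / (2 * α) * log (2 / r₀)
  have hT : 0 ≤ T := mul_nonneg (by positivity) (log_nonneg ((one_le_div hr₀).2 hdisk))
  have hexpT : exp (2 * α * T) = 2 / r₀ := by
    rw [← mul_assoc, mul_one_div_cancel (by positivity), one_mul, exp_log (by positivity)]
  refine ⟨T, ⟨hT, le_rfl⟩, one_le_max_abs_of_two_le_sq_add_sq (le_of_eq ?_)⟩
  have hrT := eq_exp_smul_of_hasDerivAt_smul_self
    (fun t ht => hasDerivAt_sq_add_sq_of_spiral (hx t ht) (hy t ht)) hT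
  rw [hrT, hexpT, smul_eq_mul, div_mul_cancel₀ _ hr₀.ne']
end
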